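/- arXiv:2307.09174 — 6 statements merged into one kernel-verified Lean document; each statement's English description precedes it below -/
import Mathlib

section
/- Let {(x_n, f_n)} be a Schauder frame of a Banach space X with x_n ≠ 0, let 𝒜 be the Banach space of scalar sequences {α_n} with ∑ α_k x_k convergent (sup-of-partial-sums norm), and let T : 𝒜 → X be the summation operator. Then the map ℳ : 𝒜 → 𝒜 defined by ℳ(α) = {f_n(Tα)}_{n∈ℕ*} is a bounded linear projection (ℳ² = ℳ) from 𝒜 onto S_X = {{f_n(x)} : x ∈ X}. -/
open Filter Topology

/-- for a Schauder frame `{(x_n, f_n)}` of `X`,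
the map `ℳ(α) = {f_n(Tα)}` is a bounded linear projection from `𝒜` onto
`S_X = {{f_n(v)} : v ∈ X}`. -/
theorem stmt5 (X : Type*) [NormedAddCommGroup X] [NormedSpace ℝ X] [CompleteSpace X]
    (x : ℕ → X) (f : ℕ → X →L[ℝ] ℝ) (hx : ∀ n, x n ≠ 0)
    (hF : ∀ v : X, Tendsto (fun n => ∑ k ∈ Finset.range n, f k v • x k) atTop (𝓝 v)) :
    -- ℳ maps 𝒜 into S_X
    (∀ (α : ℕ → ℝ) (l : X),
        Tendsto (fun n => ∑ k ∈ Finset.range n, α k • x k) atTop (𝓝 l) →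
        ∃ w : X, (fun n => f n l) = fun n => f n w) ∧
    -- ℳ is idempotent: ℳ(ℳα) = ℳα
    (∀ (α : ℕ → ℝ) (l l' : X),
        Tendsto (fun n => ∑ k ∈ Finset.range n, α k • x k) atTop (𝓝 l) →
        Tendsto (fun n => ∑ k ∈ Finset.range n, f k l • x k) atTop (𝓝 l') →
        (fun n => f n l') = fun n => f n l) ∧
    -- ℳ is bounded for the norm of 𝒜
    (∃ C : ℝ, ∀ (α : ℕ → ℝ) (l : X),
        Tendsto (fun n => ∑ k ∈ Finset.range n, α k • x k) atTop (𝓝 l) →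
        (⨆ n, ‖∑ k ∈ Finset.range n, f k l • x k‖) ≤
          C * ⨆ n, ‖∑ k ∈ Finset.range n, α k • x k‖) ∧
    -- ℳ maps 𝒜 onto S_X
    (∀ v : X, ∃ (α : ℕ → ℝ) (l : X),
        Tendsto (fun n => ∑ k ∈ Finset.range n, α k • x k) atTop (𝓝 l) ∧
        (fun n => f n l) = fun n => f n v) := by

  -- partial sum operators
  set P : ℕ → X →L[ℝ] X := fun n => ∑ k ∈ Finset.range n, (f k).smulRight (x k) with hP
  have hPapp : ∀ n v, P n v = ∑ k ∈ Finset.range n, f k v • x k := by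
    intro n v
    simp [hP, ContinuousLinearMap.sum_apply]
  refine ⟨fun α l _ => ⟨l, rfl⟩, ?_, ?_, fun v => ⟨fun n => f n v, v, hF v, rfl⟩⟩
  · intro α l l' _ h2
    have := tendsto_nhds_unique h2 (hF l)
    rw [this]
  · -- bounded
    have hpt : ∀ v : X, ∃ M : ℝ, ∀ n, ‖P n v‖ ≤ M := by
      intro v
      obtain ⟨M, hM⟩ := (hF v).norm.bddAbove_range
      exact ⟨M, fun n => by rw [hPapp]; exact hM ⟨n, rfl⟩⟩
    obtain ⟨C, hC⟩ := banach_steinhaus hpt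
    refine ⟨C, fun α l hconv => ?_⟩
    have hC0 : 0 ≤ C := le_trans (norm_nonneg (P 0)) (hC 0)
    have hbdd : BddAbove (Set.range fun n => ‖∑ k ∈ Finset.range n, α k • x k‖) :=
      hconv.norm.bddAbove_range
    have hl : ‖l‖ ≤ ⨆ n, ‖∑ k ∈ Finset.range n, α k • x k‖ :=
      le_of_tendsto hconv.norm (Filter.Eventually.of_forall fun n => le_ciSup hbdd n)
    have : (⨆ n, ‖∑ k ∈ Finset.range n, f k l • x k‖) ≤ C * ‖l‖ := by
      refine ciSup_le fun n => ?_
      rw [← hPapp]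
      calc ‖P n l‖ ≤ ‖P n‖ * ‖l‖ := (P n).le_opNorm l
        _ ≤ C * ‖l‖ := mul_le_mul_of_nonneg_right (hC n) (norm_nonneg l)
    exact this.trans (mul_le_mul_of_nonneg_left hl hC0)
end

section
/- Every unconditional Schauder frame {(x_n, f_n)} of a Banach space X is a besselian Schauder frame: there exists a constant k > 0 such that ∑_{n=1}^∞ |f_n(x)| · |f(x_n)| ≤ k ‖x‖_X ‖f‖_{X*} for all x ∈ X and f ∈ X*. -/
open Filter Topology

/-- Auxiliary recursively defined sequence of block boundaries. -/
private def Nseq (g : ℕ → ℕ) : ℕ → ℕ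
  | 0 => 0
  | k + 1 => max (Nseq g k) (g (Nseq g k)) + 1

private lemma sum_getD {β : Type*} [AddCommMonoid β] (l : List ℕ) (f : ℕ → β) :
    ∑ i ∈ Finset.range l.length, f (l.getD i 0) = (l.map f).sum := by
  induction l with
  | nil => simp
  | cons x xs ih =>
    rw [List.length_cons, Finset.sum_range_succ']
    simp only [List.getD_cons_succ, List.getD_cons_zero, List.map_cons, List.sum_cons, ih]
    exact add_comm _ _

/-- Key lemma: if all rearrangements of a series are Cauchy, then the sums over
finsets far out are small. -/
private lemma unconditional_vanishing {E : Type*} [NormedAddCommGroup E] (a : ℕ → E)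
    (h : ∀ σ : Equiv.Perm ℕ, CauchySeq (fun m => ∑ k ∈ Finset.range m, a (σ k)))
    {ε : ℝ} (hε : 0 < ε) :
    ∃ M : ℕ, ∀ G : Finset ℕ, (∀ n ∈ G, M ≤ n) → ‖∑ n ∈ G, a n‖ < ε := by
  by_contra hcon
  push_neg at hcon
  choose Gf hG1 hG2 using hcon
  set N : ℕ → ℕ := Nseq (fun M => (Gf M).sup id) with hNdef
  have hN0 : N 0 = 0 := rfl
  have hNsucc : ∀ k, N (k + 1) = max (N k) ((Gf (N k)).sup id) + 1 := fun k => rfl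
  have hNmono : StrictMono N := by
    apply strictMono_nat_of_lt_succ
    intro k
    rw [hNsucc]
    omega
  have hNle : ∀ k, k ≤ N k := fun k => hNmono.le_apply
  have hGsub : ∀ k, Gf (N k) ⊆ Finset.Ico (N k) (N (k + 1)) := by
    intro k n hn
    rw [Finset.mem_Ico]
    refine ⟨hG1 _ _ hn, ?_⟩
    have : n ≤ (Gf (N k)).sup id := Finset.le_sup (f := id) hn
    rw [hNsucc]; omega
  -- the rearranged list on each block
  set L : ℕ → List ℕ := fun k =>
    (Gf (N k)).sort (· ≤ ·) ++ ((Finset.Ico (N k) (N (k + 1)) \ Gf (N k)).sort (· ≤ ·))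
    with hLdef
  have hLlen : ∀ k, (L k).length = N (k + 1) - N k := by
    intro k
    have hcard := Finset.card_sdiff_of_subset (hGsub k)
    have hle := Finset.card_le_card (hGsub k)
    rw [Nat.card_Ico] at hle
    rw [hLdef]
    simp only [List.length_append, Finset.length_sort, hcard, Nat.card_Ico]
    omega
  have hLmem : ∀ k m, m ∈ L k ↔ m ∈ Finset.Ico (N k) (N (k + 1)) := by
    intro k m
    rw [hLdef]
    simp only [List.mem_append, Finset.mem_sort, Finset.mem_sdiff]
    constructor
    · rintro (hm | ⟨hm, -⟩)
      · exact hGsub k hm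
      · exact hm
    · intro hm
      by_cases hG : m ∈ Gf (N k)
      · exact Or.inl hG
      · exact Or.inr ⟨hm, hG⟩
  have hLnodup : ∀ k, (L k).Nodup := by
    intro k
    rw [hLdef]
    refine List.Nodup.append (Finset.sort_nodup _ _) (Finset.sort_nodup _ _) ?_
    intro m hm hm'
    rw [Finset.mem_sort] at hm hm'
    exact (Finset.mem_sdiff.1 hm').2 hm
  -- the index of the block containing n
  set K : ℕ → ℕ := fun n => Nat.findGreatest (fun k => N k ≤ n) n with hKdef
  have hK1 : ∀ n, N (K n) ≤ n := by
    intro n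
    exact Nat.findGreatest_spec (P := fun k => N k ≤ n) (Nat.zero_le n)
      (by simp only [hN0]; exact Nat.zero_le n)
  have hK2 : ∀ n, n < N (K n + 1) := by
    intro n
    by_contra hcon2
    push_neg at hcon2
    have h1 : K n + 1 ≤ n := le_trans (hNle _) hcon2
    have h2 : K n + 1 ≤ K n := Nat.le_findGreatest h1 hcon2
    omega
  have hKuniq : ∀ k n, N k ≤ n → n < N (k + 1) → K n = k := by
    intro k n h1 h2
    have hkK : k ≤ K n := Nat.le_findGreatest (le_trans (hNle k) h1) h1
    by_contra hne
    have : k + 1 ≤ K n := by omega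
    have := hNmono.monotone this
    have := hK1 n
    omega
  -- the permutation
  set σ : ℕ → ℕ := fun n => (L (K n)).getD (n - N (K n)) 0 with hσdef
  have hidx : ∀ n, n - N (K n) < (L (K n)).length := by
    intro n
    rw [hLlen]
    have := hK1 n; have := hK2 n
    omega
  have hσmem : ∀ n, σ n ∈ Finset.Ico (N (K n)) (N (K n + 1)) := by
    intro n
    rw [← hLmem]
    rw [hσdef]
    simp only
    rw [List.getD_eq_getElem _ _ (hidx n)]
    exact List.getElem_mem _
  have hKσ : ∀ n, K (σ n) = K n := by
    intro n
    have := hσmem n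
    rw [Finset.mem_Ico] at this
    exact hKuniq _ _ this.1 this.2
  have hinj : Function.Injective σ := by
    intro n m hnm
    have hk : K n = K m := by
      have e1 := hKσ n; have e2 := hKσ m
      rw [hnm] at e1; omega
    have h1 := hK1 n; have h2 := hK1 m
    have i1 := hidx n; have i2 := hidx m
    rw [hσdef] at hnm
    simp only at hnm
    rw [hk] at hnm i1 h1
    rw [List.getD_eq_getElem _ _ i1, List.getD_eq_getElem _ _ i2] at hnm
    have := ((hLnodup (K m)).getElem_inj_iff).1 hnm
    omega
  have hsurj : Function.Surjective σ := by
    intro m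
    have hm : m ∈ L (K m) := by
      rw [hLmem, Finset.mem_Ico]
      exact ⟨hK1 m, hK2 m⟩
    obtain ⟨i, hi⟩ := List.mem_iff_get.1 hm
    refine ⟨N (K m) + i, ?_⟩
    have hilen : (i : ℕ) < N (K m + 1) - N (K m) :=
      lt_of_lt_of_eq i.isLt (hLlen (K m))
    have hK : K (N (K m) + i) = K m :=
      hKuniq _ _ (Nat.le_add_right _ _) (by omega)
    simp only [hσdef, hK, Nat.add_sub_cancel_left]
    rw [List.getD_eq_getElem _ _ i.isLt]
    exact List.get_eq_getElem.symm.trans hi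
  -- contradiction with Cauchy
  have hcs := h (Equiv.ofBijective σ ⟨hinj, hsurj⟩)
  rw [Metric.cauchySeq_iff] at hcs
  obtain ⟨M, hM⟩ := hcs ε hε
  set k := M with hk
  set c := (Gf (N k)).card with hc
  have hcle : N k + c ≤ N (k + 1) := by
    have h1 := Finset.card_le_card (hGsub k)
    rw [Nat.card_Ico, ← hc] at h1
    have h2 : N k < N (k + 1) := hNmono (Nat.lt_succ_self k)
    omega
  have hp : M ≤ N k := le_trans (le_refl M) (hNle k)
  have harg : M ≤ N k + c := le_trans hp (Nat.le_add_right _ _)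
  have hkey := hM (N k + c) harg (N k) hp
  rw [dist_eq_norm] at hkey
  have hsum : (∑ j ∈ Finset.range (N k + c), a (σ j)) - ∑ j ∈ Finset.range (N k), a (σ j)
      = ∑ n ∈ Gf (N k), a n := by
    rw [← Finset.sum_Ico_eq_sub _ (Nat.le_add_right _ _)]
    rw [Finset.sum_Ico_eq_sum_range]
    simp only [Nat.add_sub_cancel_left]
    have hterm : ∀ i ∈ Finset.range c,
        a (σ (N k + i)) = a (((Gf (N k)).sort (· ≤ ·)).getD i 0) := by
      intro i hi
      rw [Finset.mem_range] at hi
      have hK : K (N k + i) = k := hKuniq _ _ (Nat.le_add_right _ _) (by omega)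
      rw [hσdef]
      simp only
      rw [hK, Nat.add_sub_cancel_left, hLdef]
      simp only
      rw [List.getD_append _ _ _ _ (by rw [Finset.length_sort]; exact hi)]
    rw [Finset.sum_congr rfl hterm]
    have hlen : c = ((Gf (N k)).sort (· ≤ ·)).length := (Finset.length_sort _).symm
    rw [hlen, sum_getD]
    have hcoe : ((Gf (N k)).sort (· ≤ ·) : Multiset ℕ) = (Gf (N k)).val := Finset.sort_eq _ _
    rw [Finset.sum_eq_multiset_sum, ← hcoe, Multiset.map_coe, Multiset.sum_coe]
  have : ε ≤ ‖(∑ j ∈ Finset.range (N k + c), a (σ j)) - ∑ j ∈ Finset.range (N k), a (σ j)‖ := by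
    rw [hsum]
    exact hG2 (N k)
  have hcoe : ∀ j, (Equiv.ofBijective σ ⟨hinj, hsurj⟩) j = σ j := fun j => rfl
  simp only [hcoe] at hkey
  linarith

/-- All finite partial sums of an unconditionally Cauchy series are bounded. -/
private lemma unconditional_bounded {E : Type*} [NormedAddCommGroup E] (a : ℕ → E)
    (h : ∀ σ : Equiv.Perm ℕ, CauchySeq (fun m => ∑ k ∈ Finset.range m, a (σ k))) :
    ∃ C : ℝ, ∀ S : Finset ℕ, ‖∑ n ∈ S, a n‖ ≤ C := by
  obtain ⟨M, hM⟩ := unconditional_vanishing a h one_pos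
  refine ⟨∑ n ∈ Finset.range M, ‖a n‖ + 1, fun S => ?_⟩
  have hsplit : ∑ n ∈ S ∩ Finset.range M, a n + ∑ n ∈ S \ Finset.range M, a n
      = ∑ n ∈ S, a n := Finset.sum_inter_add_sum_sdiff S (Finset.range M) a
  rw [← hsplit]
  refine le_trans (norm_add_le _ _) (add_le_add ?_ ?_)
  · refine le_trans (norm_sum_le _ _) ?_
    exact Finset.sum_le_sum_of_subset_of_nonneg Finset.inter_subset_right
      (fun _ _ _ => norm_nonneg _)
  · refine le_of_lt (hM _ ?_)
    intro n hn
    rw [Finset.mem_sdiff, Finset.mem_range] at hn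
    omega

/-- every unconditional Schauder frame is a besselian Schauder frame:
there is `k > 0` with `∑_n |f_n(x)|·|f(x_n)| ≤ k ‖x‖ ‖f‖` for all `x ∈ X`, `f ∈ X*`. -/
theorem stmt9 (X : Type*) [NormedAddCommGroup X] [NormedSpace ℝ X] [CompleteSpace X]
    (x : ℕ → X) (f : ℕ → X →L[ℝ] ℝ)
    (hF : ∀ (v : X) (σ : Equiv.Perm ℕ),
        Tendsto (fun n => ∑ k ∈ Finset.range n, f (σ k) v • x (σ k)) atTop (𝓝 v)) :
    ∃ C : ℝ, 0 < C ∧ ∀ (v : X) (g : X →L[ℝ] ℝ),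
      Summable (fun n => |f n v| * |g (x n)|) ∧
      ∑' n, |f n v| * |g (x n)| ≤ C * ‖v‖ * ‖g‖ := by
  -- the finite-section operators
  set T : Finset ℕ → X →L[ℝ] X := fun S => ∑ n ∈ S, (f n).smulRight (x n) with hTdef
  have hTapp : ∀ S v, T S v = ∑ n ∈ S, f n v • x n := by
    intro S v
    rw [hTdef]
    simp [ContinuousLinearMap.sum_apply, ContinuousLinearMap.smulRight_apply]
  -- pointwise bound via the unconditional convergence hypothesis
  have hpt : ∀ v : X, ∃ C : ℝ, ∀ S : Finset ℕ, ‖T S v‖ ≤ C := by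
    intro v
    obtain ⟨C, hC⟩ := unconditional_bounded (fun n => f n v • x n)
      (fun σ => (hF v σ).cauchySeq)
    exact ⟨C, fun S => by rw [hTapp]; exact hC S⟩
  obtain ⟨C', hC'⟩ := banach_steinhaus hpt
  have hC'0 : 0 ≤ C' := le_trans (norm_nonneg _) (hC' ∅)
  refine ⟨2 * C' + 1, by linarith, fun v g => ?_⟩
  have key : ∀ S : Finset ℕ, ∑ n ∈ S, |f n v| * |g (x n)| ≤ (2 * C' + 1) * ‖v‖ * ‖g‖ := by
    intro S
    have habs : ∀ n, |f n v| * |g (x n)| = |g (f n v • x n)| := by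
      intro n
      rw [← abs_mul]
      congr 1
      rw [map_smul, smul_eq_mul]
    have hbd : ∀ P : Finset ℕ, |g (T P v)| ≤ C' * ‖v‖ * ‖g‖ := by
      intro P
      calc |g (T P v)| ≤ ‖g‖ * ‖T P v‖ := (g.le_opNorm _)
        _ ≤ ‖g‖ * (C' * ‖v‖) := by
            refine mul_le_mul_of_nonneg_left ?_ (norm_nonneg _)
            exact le_trans ((T P).le_opNorm v)
              (mul_le_mul_of_nonneg_right (hC' P) (norm_nonneg _))
        _ = C' * ‖v‖ * ‖g‖ := by ring
    set P := S.filter (fun n => 0 ≤ g (f n v • x n)) with hP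
    set Q := S.filter (fun n => ¬ 0 ≤ g (f n v • x n)) with hQ
    have hsplit : ∑ n ∈ S, |f n v| * |g (x n)|
        = ∑ n ∈ P, |f n v| * |g (x n)| + ∑ n ∈ Q, |f n v| * |g (x n)| :=
      (Finset.sum_filter_add_sum_filter_not S _ _).symm
    have hPsum : ∑ n ∈ P, |f n v| * |g (x n)| = g (T P v) := by
      rw [hTapp, map_sum]
      refine Finset.sum_congr rfl fun n hn => ?_
      rw [habs n, abs_of_nonneg (Finset.mem_filter.1 hn).2]
    have hQsum : ∑ n ∈ Q, |f n v| * |g (x n)| = -(g (T Q v)) := by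
      rw [hTapp, map_sum, ← Finset.sum_neg_distrib]
      refine Finset.sum_congr rfl fun n hn => ?_
      rw [habs n, abs_of_neg (lt_of_not_ge (Finset.mem_filter.1 hn).2)]
    rw [hsplit, hPsum, hQsum]
    have h1 : g (T P v) ≤ C' * ‖v‖ * ‖g‖ := le_trans (le_abs_self _) (hbd P)
    have h2 : -(g (T Q v)) ≤ C' * ‖v‖ * ‖g‖ := le_trans (neg_le_abs _) (hbd Q)
    have h3 : 0 ≤ ‖v‖ * ‖g‖ := mul_nonneg (norm_nonneg _) (norm_nonneg _)
    nlinarith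
  have hnn : ∀ n, 0 ≤ |f n v| * |g (x n)| :=
    fun n => mul_nonneg (abs_nonneg _) (abs_nonneg _)
  have hsummable : Summable (fun n => |f n v| * |g (x n)|) :=
    summable_of_sum_le hnn key
  exact ⟨hsummable, Summable.tsum_le_of_sum_le hsummable key⟩
end

section
/- Let X be a Banach space and {x_n} a sequence of nonzero vectors. Let 𝒜̃ be the linear space of scalar sequences {α_n} such that ∑_k α_k x_k converges unconditionally, endowed with the norm ‖{α_n}‖ = sup over permutations σ of ℕ* and n ∈ ℕ* of ‖∑_{k=1}^n α_{σ(k)} x_{σ(k)}‖_X. Then this norm is finite on 𝒜̃ and 𝒜̃ is a Banach space. -/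
open Filter Topology

noncomputable def exhaustE (g : ℕ → Finset ℕ) (hcard : ∀ k, ∃ n, k < (g n).card) : ℕ → Finset ℕ
  | 0 => ∅
  | (k+1) =>
    let E := exhaustE g hcard k
    let s := g (Nat.find (hcard k)) \ E
    if h : s.Nonempty then insert (s.min' h) E else E

lemma exhaust_inv (g : ℕ → Finset ℕ) (hmono : Monotone g) (hcard : ∀ k, ∃ n, k < (g n).card)
    (k : ℕ) : (exhaustE g hcard k).card = k ∧ (∀ n, k ≤ (g n).card → exhaustE g hcard k ⊆ g n) := by
  induction k with
  | zero => exact ⟨rfl, fun n _ => by simp [exhaustE]⟩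
  | succ k ih =>
    obtain ⟨hc, hsub⟩ := ih
    have hfind := Nat.find_spec (hcard k)
    have hEsub : exhaustE g hcard k ⊆ g (Nat.find (hcard k)) := hsub _ hfind.le
    have hne : (g (Nat.find (hcard k)) \ exhaustE g hcard k).Nonempty := by
      rw [Finset.sdiff_nonempty]
      intro hcon
      exact absurd (Finset.card_le_card hcon) (by omega)
    have hstep : exhaustE g hcard (k+1)
        = insert ((g (Nat.find (hcard k)) \ exhaustE g hcard k).min' hne) (exhaustE g hcard k) := by
      simp only [exhaustE, dif_pos hne]
    have hmem := Finset.min'_mem _ hne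
    have hnotmem : (g (Nat.find (hcard k)) \ exhaustE g hcard k).min' hne ∉ exhaustE g hcard k :=
      (Finset.mem_sdiff.mp hmem).2
    constructor
    · rw [hstep, Finset.card_insert_of_notMem hnotmem, hc]
    · intro n hn
      have hfle : Nat.find (hcard k) ≤ n := Nat.find_min' (hcard k) (by omega)
      rw [hstep]
      exact Finset.insert_subset ((hmono hfle) (Finset.mem_sdiff.mp hmem).1)
        (hsub n (by omega))

lemma exists_perm_exhaustion (g : ℕ → Finset ℕ) (hmono : Monotone g)
    (hcard : ∀ k, ∃ n, k < (g n).card) (hcover : ∀ j, ∃ n, j ∈ g n) :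
    ∃ e : Equiv.Perm ℕ, ∀ n, Finset.image e (Finset.range (g n).card) = g n := by
  classical
  set E := exhaustE g hcard with hE
  have key : ∀ k, ∃ m, E (k+1) = insert m (E k) ∧ m ∉ E k := by
    intro k
    obtain ⟨hc, hsub⟩ := exhaust_inv g hmono hcard k
    rw [← hE] at hc hsub
    have hfind := Nat.find_spec (hcard k)
    have hne : (g (Nat.find (hcard k)) \ E k).Nonempty := by
      rw [Finset.sdiff_nonempty]
      intro hcon
      exact absurd (Finset.card_le_card hcon) (by omega)
    refine ⟨_, ?_, (Finset.mem_sdiff.mp (Finset.min'_mem _ hne)).2⟩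
    simp only [hE, exhaustE, dif_pos hne]
    exact dif_pos hne
  choose f hf hf' using key
  have hmonoE : ∀ j k, j ≤ k → E j ⊆ E k := by
    intro j k hjk
    induction k with
    | zero => simp_all
    | succ k ih =>
      rcases Nat.lt_or_ge j (k+1) with h | h
      · rw [hf k]; exact (ih (by omega)).trans (Finset.subset_insert _ _)
      · have : j = k+1 := by omega
        subst this; rfl
  have himg : ∀ k, Finset.image f (Finset.range k) = E k := by
    intro k
    induction k with
    | zero => rfl
    | succ k ih => rw [Finset.range_add_one, Finset.image_insert, ih, ← hf]
  have hinj : Function.Injective f := by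
    intro i j hij
    by_contra hne
    wlog h : i < j generalizing i j
    · exact this hij.symm (Ne.symm hne) (by omega)
    · have : f i ∈ E j := hmonoE (i+1) j h (by rw [hf]; exact Finset.mem_insert_self _ _)
      rw [hij] at this
      exact hf' j this
  have hEg : ∀ n, E ((g n).card) = g n := by
    intro n
    obtain ⟨hc, hsub⟩ := exhaust_inv g hmono hcard ((g n).card)
    rw [← hE] at hc hsub
    exact Finset.eq_of_subset_of_card_le (hsub n le_rfl) (by omega)
  have hsurj : Function.Surjective f := by
    intro j
    obtain ⟨n, hn⟩ := hcover j
    have : j ∈ E ((g n).card) := by rw [hEg]; exact hn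
    rw [← himg] at this
    obtain ⟨i, _, hi⟩ := Finset.mem_image.mp this
    exact ⟨i, hi⟩
  refine ⟨Equiv.ofBijective f ⟨hinj, hsurj⟩, fun n => ?_⟩
  have hcoe : ⇑(Equiv.ofBijective f ⟨hinj, hsurj⟩) = f := rfl
  rw [hcoe, himg, hEg]

noncomputable def badS {X : Type*} [NormedAddCommGroup X] (F : ℕ → X)
    (H : ∀ C : ℝ, ∃ s : Finset ℕ, C < ‖∑ i ∈ s, F i‖) : ℕ → Finset ℕ
  | 0 => ∅
  | n+1 =>
    let U := badS F H n ∪ Finset.range n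
    U ∪ ((H ((n : ℝ) + ∑ i ∈ U, ‖F i‖)).choose \ U)

lemma bdd_of_perm_conv {X : Type*} [NormedAddCommGroup X] (F : ℕ → X)
    (h : ∀ σ : Equiv.Perm ℕ, ∃ l,
      Tendsto (fun n => ∑ k ∈ Finset.range n, F (σ k)) atTop (𝓝 l)) :
    ∃ C, ∀ s : Finset ℕ, ‖∑ i ∈ s, F i‖ ≤ C := by
  by_contra hcon
  push_neg at hcon
  have H : ∀ C : ℝ, ∃ s : Finset ℕ, C < ‖∑ i ∈ s, F i‖ := hcon
  set S := badS F H with hS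
  set U : ℕ → Finset ℕ := fun n => S n ∪ Finset.range n with hU
  set B : ℕ → Finset ℕ := fun n => (H ((n : ℝ) + ∑ i ∈ U n, ‖F i‖)).choose with hB
  have hstep : ∀ n, S (n+1) = U n ∪ (B n \ U n) := fun n => rfl
  have hbig : ∀ n : ℕ, (n : ℝ) < ‖∑ i ∈ B n \ U n, F i‖ := by
    intro n
    have hspec : (n : ℝ) + ∑ i ∈ U n, ‖F i‖ < ‖∑ i ∈ B n, F i‖ :=
      (H ((n : ℝ) + ∑ i ∈ U n, ‖F i‖)).choose_spec
    have hsplit : ∑ i ∈ B n, F i = ∑ i ∈ B n \ U n, F i + ∑ i ∈ B n ∩ U n, F i := by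
      rw [← Finset.sum_union (Finset.disjoint_sdiff_inter _ _), Finset.sdiff_union_inter]
    have h1 : ‖∑ i ∈ B n ∩ U n, F i‖ ≤ ∑ i ∈ U n, ‖F i‖ :=
      (norm_sum_le _ _).trans (Finset.sum_le_sum_of_subset_of_nonneg
        Finset.inter_subset_right (fun _ _ _ => norm_nonneg _))
    have h2 : ‖∑ i ∈ B n, F i‖ ≤ ‖∑ i ∈ B n \ U n, F i‖ + ‖∑ i ∈ B n ∩ U n, F i‖ := by
      rw [hsplit]; exact norm_add_le _ _
    linarith
  set g : ℕ → Finset ℕ := fun m => if m % 2 = 0 then U (m/2) else S (m/2 + 1) with hg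
  have hUS : ∀ n, U n ⊆ S (n+1) := fun n => (hstep n) ▸ Finset.subset_union_left
  have hSU : ∀ n, S n ⊆ U n := fun n => Finset.subset_union_left
  have hmono : Monotone g := by
    apply monotone_nat_of_le_succ
    intro m
    rcases Nat.even_or_odd m with ⟨j, hj⟩ | ⟨j, hj⟩
    · have e1 : m % 2 = 0 := by omega
      have e2 : (m+1) % 2 = 1 := by omega
      have e3 : (m+1) / 2 = m / 2 := by omega
      simp only [hg, e1, e2, e3]
      norm_num
      exact hUS (m/2)
    · have e1 : m % 2 = 1 := by omega
      have e2 : (m+1) % 2 = 0 := by omega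
      have e3 : (m+1) / 2 = m / 2 + 1 := by omega
      simp only [hg, e1, e2, e3]
      norm_num
      exact hSU (m/2 + 1)
  have hUcard : ∀ n, n ≤ (U n).card := by
    intro n
    calc n = (Finset.range n).card := (Finset.card_range n).symm
    _ ≤ (U n).card := Finset.card_le_card Finset.subset_union_right
  have hgeven : ∀ n, g (2 * n) = U n := by
    intro n
    have e1 : (2*n) % 2 = 0 := by omega
    have e2 : (2*n) / 2 = n := by omega
    simp only [hg, e1, e2]
    norm_num
  have hgodd : ∀ n, g (2 * n + 1) = S (n + 1) := by
    intro n
    have e1 : (2*n+1) % 2 = 1 := by omega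
    have e2 : (2*n+1) / 2 = n := by omega
    simp only [hg, e1, e2]
    norm_num
  have hcard : ∀ k, ∃ n, k < (g n).card := by
    intro k
    exact ⟨2 * (k+1), by rw [hgeven]; exact lt_of_lt_of_le (Nat.lt_succ_self k) (hUcard (k+1))⟩
  have hcover : ∀ j, ∃ n, j ∈ g n := by
    intro j
    refine ⟨2 * (j+1), ?_⟩
    rw [hgeven]
    exact Finset.subset_union_right (Finset.mem_range.mpr (Nat.lt_succ_self j))
  obtain ⟨e, he⟩ := exists_perm_exhaustion g hmono hcard hcover
  obtain ⟨l, hl⟩ := h e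
  obtain ⟨N, hN⟩ := Metric.cauchySeq_iff.mp hl.cauchySeq 1 one_pos
  set n := N + 1 with hn
  have hPU : ∑ k ∈ Finset.range ((U n).card), F (e k) = ∑ i ∈ U n, F i := by
    conv_rhs => rw [← hgeven n, ← he (2*n)]
    rw [Finset.sum_image (fun a _ b _ hab => e.injective hab), hgeven]
  have hPS : ∑ k ∈ Finset.range ((S (n+1)).card), F (e k) = ∑ i ∈ S (n+1), F i := by
    conv_rhs => rw [← hgodd n, ← he (2*n+1)]
    rw [Finset.sum_image (fun a _ b _ hab => e.injective hab), hgodd]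
  have hple : N ≤ (U n).card := le_trans (by omega) (hUcard n)
  have hqle : N ≤ (S (n+1)).card := hple.trans (Finset.card_le_card (hUS n))
  have hd := hN _ hqle _ hple
  rw [dist_eq_norm, hPU, hPS] at hd
  have hdiff : ∑ i ∈ S (n+1), F i - ∑ i ∈ U n, F i = ∑ i ∈ B n \ U n, F i := by
    rw [hstep n, Finset.sum_union Finset.sdiff_disjoint.symm]
    abel
  rw [hdiff] at hd
  have := hbig n
  have hn1 : (1 : ℝ) ≤ (n : ℝ) := by exact_mod_cast Nat.one_le_iff_ne_zero.mpr (by omega)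
  linarith


/-- the space `𝒜̃` of coefficient sequences of unconditionally convergent
series `∑ α_k x_k`, with the norm `sup_{σ,n} ‖∑_{k<n} α_{σ(k)} x_{σ(k)}‖`, has a finite
norm on each of its elements, is a linear space, and is complete (a Banach space). -/
theorem stmt12 (X : Type*) [NormedAddCommGroup X] [NormedSpace ℝ X] [CompleteSpace X]
    (x : ℕ → X) (hx : ∀ n, x n ≠ 0) :
    -- the defining supremum is finite on 𝒜̃
    (∀ α : ℕ → ℝ,
        (∀ σ : Equiv.Perm ℕ, ∃ l,
          Tendsto (fun n => ∑ k ∈ Finset.range n, α (σ k) • x (σ k)) atTop (𝓝 l)) →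
        BddAbove (Set.range fun p : Equiv.Perm ℕ × ℕ =>
          ‖∑ k ∈ Finset.range p.2, α (p.1 k) • x (p.1 k)‖)) ∧
    -- 𝒜̃ is closed under addition
    (∀ α β : ℕ → ℝ,
        (∀ σ : Equiv.Perm ℕ, ∃ l,
          Tendsto (fun n => ∑ k ∈ Finset.range n, α (σ k) • x (σ k)) atTop (𝓝 l)) →
        (∀ σ : Equiv.Perm ℕ, ∃ l,
          Tendsto (fun n => ∑ k ∈ Finset.range n, β (σ k) • x (σ k)) atTop (𝓝 l)) →
        (∀ σ : Equiv.Perm ℕ, ∃ l,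
          Tendsto (fun n => ∑ k ∈ Finset.range n, (α (σ k) + β (σ k)) • x (σ k))
            atTop (𝓝 l))) ∧
    -- 𝒜̃ is closed under scalar multiplication
    (∀ (c : ℝ) (α : ℕ → ℝ),
        (∀ σ : Equiv.Perm ℕ, ∃ l,
          Tendsto (fun n => ∑ k ∈ Finset.range n, α (σ k) • x (σ k)) atTop (𝓝 l)) →
        (∀ σ : Equiv.Perm ℕ, ∃ l,
          Tendsto (fun n => ∑ k ∈ Finset.range n, (c * α (σ k)) • x (σ k)) atTop (𝓝 l))) ∧
    -- 𝒜̃ is complete for the norm ‖α‖ = ⨆_{(σ,n)} ‖∑_{k<n} α_{σ(k)} x_{σ(k)}‖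
    (∀ a : ℕ → ℕ → ℝ,
        (∀ m, ∀ σ : Equiv.Perm ℕ, ∃ l,
          Tendsto (fun n => ∑ k ∈ Finset.range n, a m (σ k) • x (σ k)) atTop (𝓝 l)) →
        (∀ ε > 0, ∃ K, ∀ p q, K ≤ p → K ≤ q →
          (⨆ r : Equiv.Perm ℕ × ℕ,
            ‖∑ k ∈ Finset.range r.2, (a p (r.1 k) - a q (r.1 k)) • x (r.1 k)‖) < ε) →
        ∃ α : ℕ → ℝ,
          (∀ σ : Equiv.Perm ℕ, ∃ l,
            Tendsto (fun n => ∑ k ∈ Finset.range n, α (σ k) • x (σ k)) atTop (𝓝 l)) ∧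
          Tendsto (fun m => ⨆ r : Equiv.Perm ℕ × ℕ,
              ‖∑ k ∈ Finset.range r.2, (a m (r.1 k) - α (r.1 k)) • x (r.1 k)‖)
            atTop (𝓝 0)) := by
  have hxpos : ∀ i, 0 < ‖x i‖ := fun i => norm_pos_iff.mpr (hx i)
  have h1 : ∀ α : ℕ → ℝ,
      (∀ σ : Equiv.Perm ℕ, ∃ l,
        Tendsto (fun n => ∑ k ∈ Finset.range n, α (σ k) • x (σ k)) atTop (𝓝 l)) →
      BddAbove (Set.range fun p : Equiv.Perm ℕ × ℕ =>
        ‖∑ k ∈ Finset.range p.2, α (p.1 k) • x (p.1 k)‖) := by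
    intro α hα
    obtain ⟨C, hC⟩ := bdd_of_perm_conv (fun i => α i • x i) hα
    refine ⟨C, ?_⟩
    rintro v ⟨⟨σ, n⟩, rfl⟩
    simp only
    have himg : ∑ i ∈ (Finset.range n).image σ, α i • x i
        = ∑ k ∈ Finset.range n, α (σ k) • x (σ k) :=
      Finset.sum_image (fun a _ b _ h => σ.injective h)
    rw [← himg]
    exact hC _
  have h2 : ∀ α β : ℕ → ℝ,
      (∀ σ : Equiv.Perm ℕ, ∃ l,
        Tendsto (fun n => ∑ k ∈ Finset.range n, α (σ k) • x (σ k)) atTop (𝓝 l)) →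
      (∀ σ : Equiv.Perm ℕ, ∃ l,
        Tendsto (fun n => ∑ k ∈ Finset.range n, β (σ k) • x (σ k)) atTop (𝓝 l)) →
      (∀ σ : Equiv.Perm ℕ, ∃ l,
        Tendsto (fun n => ∑ k ∈ Finset.range n, (α (σ k) + β (σ k)) • x (σ k))
          atTop (𝓝 l)) := by
    intro α β hα hβ σ
    obtain ⟨la, ha⟩ := hα σ
    obtain ⟨lb, hb⟩ := hβ σ
    exact ⟨la + lb, by simpa [add_smul, Finset.sum_add_distrib] using ha.add hb⟩
  have h3 : ∀ (c : ℝ) (α : ℕ → ℝ),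
      (∀ σ : Equiv.Perm ℕ, ∃ l,
        Tendsto (fun n => ∑ k ∈ Finset.range n, α (σ k) • x (σ k)) atTop (𝓝 l)) →
      (∀ σ : Equiv.Perm ℕ, ∃ l,
        Tendsto (fun n => ∑ k ∈ Finset.range n, (c * α (σ k)) • x (σ k)) atTop (𝓝 l)) := by
    intro c α hα σ
    obtain ⟨l, hl⟩ := hα σ
    exact ⟨c • l, by simpa [Finset.smul_sum, mul_smul] using hl.const_smul c⟩
  refine ⟨h1, h2, h3, ?_⟩
  intro a hconv hcau
  -- differences of elements of 𝒜̃ are in 𝒜̃, hence their partial sums are bounded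
  have diffconv : ∀ p q (σ : Equiv.Perm ℕ), ∃ l,
      Tendsto (fun n => ∑ k ∈ Finset.range n, (a p (σ k) - a q (σ k)) • x (σ k))
        atTop (𝓝 l) := by
    intro p q σ
    obtain ⟨lp, hp⟩ := hconv p σ
    obtain ⟨lq, hq⟩ := hconv q σ
    exact ⟨lp - lq, by simpa [sub_smul, Finset.sum_sub_distrib] using hp.sub hq⟩
  have bddpq : ∀ p q, BddAbove (Set.range fun r : Equiv.Perm ℕ × ℕ =>
      ‖∑ k ∈ Finset.range r.2, (a p (r.1 k) - a q (r.1 k)) • x (r.1 k)‖) :=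
    fun p q => h1 (fun i => a p i - a q i) (diffconv p q)
  have le_sup : ∀ p q (σ : Equiv.Perm ℕ) (n : ℕ),
      ‖∑ k ∈ Finset.range n, (a p (σ k) - a q (σ k)) • x (σ k)‖ ≤
        ⨆ r : Equiv.Perm ℕ × ℕ,
          ‖∑ k ∈ Finset.range r.2, (a p (r.1 k) - a q (r.1 k)) • x (r.1 k)‖ :=
    fun p q σ n => le_ciSup (bddpq p q) (σ, n)
  -- pointwise Cauchy, extract candidate limit α
  have hptCauchy : ∀ i : ℕ, CauchySeq fun m => a m i := by
    intro i
    rw [Metric.cauchySeq_iff]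
    intro ε hε
    obtain ⟨K, hK⟩ := hcau (ε * ‖x i‖) (mul_pos hε (hxpos i))
    refine ⟨K, fun p hp q hq => ?_⟩
    have h1' := (le_sup p q (Equiv.swap 0 i) 1).trans_lt (hK p q hp hq)
    rw [Finset.sum_range_one, Equiv.swap_apply_left, norm_smul, Real.norm_eq_abs] at h1'
    rw [Real.dist_eq]
    exact (mul_lt_mul_iff_of_pos_right (hxpos i)).mp h1'
  have hlim : ∀ i, ∃ L : ℝ, Tendsto (fun m => a m i) atTop (𝓝 L) :=
    fun i => cauchySeq_tendsto_of_complete (hptCauchy i)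
  choose α hα using hlim
  -- key uniform estimate
  have key : ∀ ε > (0:ℝ), ∃ K, ∀ p, K ≤ p → ∀ (σ : Equiv.Perm ℕ) (n : ℕ),
      ‖∑ k ∈ Finset.range n, (a p (σ k) - α (σ k)) • x (σ k)‖ ≤ ε := by
    intro ε hε
    obtain ⟨K, hK⟩ := hcau ε hε
    refine ⟨K, fun p hp σ n => ?_⟩
    have hTend : Tendsto
        (fun q => ‖∑ k ∈ Finset.range n, (a p (σ k) - a q (σ k)) • x (σ k)‖) atTop
        (𝓝 ‖∑ k ∈ Finset.range n, (a p (σ k) - α (σ k)) • x (σ k)‖) := by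
      apply Tendsto.norm
      apply tendsto_finset_sum
      intro k _
      exact (tendsto_const_nhds.sub (hα (σ k))).smul_const _
    apply le_of_tendsto hTend
    filter_upwards [eventually_ge_atTop K] with q hq
    exact ((le_sup p q σ n).trans_lt (hK p q hp hq)).le
  -- α belongs to 𝒜̃
  have hαconv : ∀ σ : Equiv.Perm ℕ, ∃ l,
      Tendsto (fun n => ∑ k ∈ Finset.range n, α (σ k) • x (σ k)) atTop (𝓝 l) := by
    intro σ
    apply cauchySeq_tendsto_of_complete
    rw [Metric.cauchySeq_iff]
    intro ε hε
    obtain ⟨K, hK⟩ := key (ε/4) (by linarith)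
    obtain ⟨lK, hlK⟩ := hconv K σ
    obtain ⟨N, hN⟩ := Metric.cauchySeq_iff.mp hlK.cauchySeq (ε/4) (by linarith)
    refine ⟨N, fun m hm n hn => ?_⟩
    set A : ℕ → X := fun j => ∑ k ∈ Finset.range j, α (σ k) • x (σ k) with hA
    set B : ℕ → X := fun j => ∑ k ∈ Finset.range j, a K (σ k) • x (σ k) with hB
    set D : ℕ → X := fun j => ∑ k ∈ Finset.range j, (a K (σ k) - α (σ k)) • x (σ k) with hDdef
    have hD : ∀ j, B j - A j = D j := by
      intro j
      simp only [hA, hB, hDdef, sub_smul, Finset.sum_sub_distrib]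
    have hid : A m - A n = ((B m - B n) - D m) + D n := by
      rw [← hD m, ← hD n]; abel
    have hDm : ‖D m‖ ≤ ε/4 := hK K le_rfl σ m
    have hDn : ‖D n‖ ≤ ε/4 := hK K le_rfl σ n
    have hBmn : ‖B m - B n‖ < ε/4 := by
      have := hN m hm n hn
      rwa [dist_eq_norm] at this
    rw [dist_eq_norm, hid]
    calc ‖((B m - B n) - D m) + D n‖ ≤ ‖(B m - B n) - D m‖ + ‖D n‖ := norm_add_le _ _
      _ ≤ ‖B m - B n‖ + ‖D m‖ + ‖D n‖ := by
          have := norm_sub_le (B m - B n) (D m)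
          linarith
      _ < ε := by linarith
  refine ⟨α, hαconv, ?_⟩
  rw [Metric.tendsto_atTop]
  intro ε hε
  obtain ⟨K, hK⟩ := key (ε/2) (by linarith)
  refine ⟨K, fun m hm => ?_⟩
  have hbddm : BddAbove (Set.range fun r : Equiv.Perm ℕ × ℕ =>
      ‖∑ k ∈ Finset.range r.2, (a m (r.1 k) - α (r.1 k)) • x (r.1 k)‖) := by
    refine ⟨ε/2, ?_⟩
    rintro v ⟨⟨σ, n⟩, rfl⟩
    exact hK m hm σ n
  have hsup_le : (⨆ r : Equiv.Perm ℕ × ℕ,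
      ‖∑ k ∈ Finset.range r.2, (a m (r.1 k) - α (r.1 k)) • x (r.1 k)‖) ≤ ε/2 :=
    ciSup_le fun r => hK m hm r.1 r.2
  have hsup_nonneg : (0:ℝ) ≤ ⨆ r : Equiv.Perm ℕ × ℕ,
      ‖∑ k ∈ Finset.range r.2, (a m (r.1 k) - α (r.1 k)) • x (r.1 k)‖ := by
    have := le_ciSup hbddm ((1 : Equiv.Perm ℕ), 0)
    simpa using this
  rw [Real.dist_eq, sub_zero, abs_of_nonneg hsup_nonneg]
  linarith
end

section
/- Let X be a Banach space and {x_n} a sequence of nonzero vectors, and let 𝒜̃ be the Banach space of scalar sequences {α_n} with ∑ α_k x_k unconditionally convergent, normed by the supremum over permutations and indices of the norms of permuted partial sums. Then the unit vectors e_n = {δ_{n,k}}_k form an unconditional Schauder basis of 𝒜̃: for every {α_n} ∈ 𝒜̃ and every permutation σ₀ of ℕ*, ∑_{k=1}^n α_{σ₀(k)} e_{σ₀(k)} converges to {α_n} in 𝒜̃ as n → ∞. -/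
open Filter Topology

section Aux
open Finset

namespace Stmt13Aux

variable (G : ℕ → Finset ℕ)

def MM : ℕ → ℕ
  | 0 => 0
  | i + 1 => max (MM i + 1) ((G (MM i)).sup id + 1)

lemma MM_lt (i : ℕ) : MM G i < MM G (i + 1) :=
  lt_of_lt_of_le (Nat.lt_succ_self _) (le_max_left _ _)

lemma MM_strictMono : StrictMono (MM G) :=
  strictMono_nat_of_lt_succ (MM_lt G)

lemma MM_ge (i : ℕ) : i ≤ MM G i := by
  induction i with
  | zero => simp
  | succ n ih => have := MM_lt G n; omega

lemma blkEx (n : ℕ) : ∃ i, n < MM G (i + 1) :=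
  ⟨n, lt_of_lt_of_le n.lt_succ_self (MM_ge G (n + 1))⟩

def blk (n : ℕ) : ℕ := Nat.find (blkEx G n)

lemma blk_lt (n : ℕ) : n < MM G (blk G n + 1) := Nat.find_spec (blkEx G n)

lemma blk_le (n : ℕ) : MM G (blk G n) ≤ n := by
  rcases h : blk G n with _ | i
  · simp [MM]
  · have := Nat.find_min (blkEx G n) (m := i) (by rw [← blk]; omega)
    exact not_lt.mp this

lemma blk_eq {i n : ℕ} (h₁ : MM G i ≤ n) (h₂ : n < MM G (i + 1)) : blk G n = i := by
  have hle : blk G n ≤ i := by show Nat.find (blkEx G n) ≤ i; exact Nat.find_le h₂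
  rcases lt_or_eq_of_le hle with h | h
  · exfalso
    have : MM G (blk G n + 1) ≤ MM G i := (MM_strictMono G).monotone (by omega)
    have := blk_lt G n
    omega
  · exact h


def Gi (i : ℕ) : Finset ℕ := G (MM G i)

def Iv (i : ℕ) : Finset ℕ := Finset.Ico (MM G i) (MM G (i + 1))

def AL (i : ℕ) : List ℕ := (Iv G i \ Gi G i).sort (· ≤ ·)

def BL (i : ℕ) : List ℕ := (Gi G i).sort (· ≤ ·)

def blockList (i : ℕ) : List ℕ := AL G i ++ BL G i

variable {G} (hG : ∀ N, ∀ j ∈ G N, N ≤ j)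
include hG

lemma Gi_subset (i : ℕ) : Gi G i ⊆ Iv G i := by
  intro j hj
  have h1 : MM G i ≤ j := hG _ _ hj
  have h2 : j ≤ (G (MM G i)).sup id := Finset.le_sup (f := id) hj
  have h3 : (G (MM G i)).sup id + 1 ≤ MM G (i + 1) := le_max_right _ _
  simp only [Iv, Finset.mem_Ico]
  omega

lemma card_le (i : ℕ) : (Gi G i).card ≤ MM G (i + 1) - MM G i := by
  have := Finset.card_le_card (Gi_subset hG i)
  simpa [Iv] using this

lemma AL_length (i : ℕ) : (AL G i).length = (MM G (i + 1) - MM G i) - (Gi G i).card := by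
  rw [AL, Finset.length_sort, Finset.card_sdiff_of_subset (Gi_subset hG i)]
  simp [Iv]

lemma blockList_length (i : ℕ) : (blockList G i).length = MM G (i + 1) - MM G i := by
  have := card_le hG i
  simp [blockList, AL_length hG, BL, Finset.length_sort]
  omega

omit hG in
lemma blockList_nodup (i : ℕ) : (blockList G i).Nodup := by
  refine List.Nodup.append (Finset.sort_nodup _ _) (Finset.sort_nodup _ _) ?_
  intro a ha hb
  rw [AL, Finset.mem_sort] at ha
  rw [BL, Finset.mem_sort] at hb
  exact (Finset.mem_sdiff.mp ha).2 hb

lemma mem_blockList {i a : ℕ} : a ∈ blockList G i ↔ a ∈ Iv G i := by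
  simp only [blockList, List.mem_append, AL, BL, Finset.mem_sort, Finset.mem_sdiff]
  constructor
  · rintro (⟨h, _⟩ | h)
    · exact h
    · exact Gi_subset hG i h
  · intro h
    by_cases hg : a ∈ Gi G i
    · exact Or.inr hg
    · exact Or.inl ⟨h, hg⟩


variable (G) in
def ff (n : ℕ) : ℕ := (blockList G (blk G n)).getD (n - MM G (blk G n)) 0

lemma idx_lt (n : ℕ) : n - MM G (blk G n) < (blockList G (blk G n)).length := by
  have h1 := blk_le G n
  have h2 := blk_lt G n
  rw [blockList_length hG]
  omega

lemma ff_mem (n : ℕ) : ff G n ∈ Iv G (blk G n) := by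
  rw [← mem_blockList hG, ff, List.getD_eq_getElem _ _ (idx_lt hG n)]
  exact List.getElem_mem _

lemma blk_ff (n : ℕ) : blk G (ff G n) = blk G n := by
  have := ff_mem hG n
  simp only [Iv, Finset.mem_Ico] at this
  exact blk_eq G this.1 this.2

lemma ff_inj : Function.Injective (ff G) := by
  intro n n' h
  have hb : blk G n = blk G n' := by
    rw [← blk_ff hG n, ← blk_ff hG n', h]
  rw [ff, ff, ← hb, List.getD_eq_getElem _ _ (idx_lt hG n),
    List.getD_eq_getElem _ _ (hb ▸ idx_lt hG n')] at h
  have := ((blockList_nodup (G := G) (blk G n)).getElem_inj_iff).mp h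
  have h1 := blk_le G n
  have h2 := blk_le G n'
  rw [← hb] at h2
  omega

lemma ff_surj : Function.Surjective (ff G) := by
  intro m
  set i := blk G m with hi
  have hm : m ∈ blockList G i := by
    rw [mem_blockList hG]
    simp only [Iv, Finset.mem_Ico]
    exact ⟨blk_le G m, blk_lt G m⟩
  obtain ⟨j, hj, hjm⟩ := List.mem_iff_getElem.mp hm
  refine ⟨MM G i + j, ?_⟩
  have hlt : MM G i + j < MM G (i + 1) := by
    rw [blockList_length hG] at hj
    have := MM_lt G i
    omega
  have hble : blk G (MM G i + j) = i := blk_eq G (Nat.le_add_right _ _) hlt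
  rw [ff, hble, Nat.add_sub_cancel_left, List.getD_eq_getElem _ _ (by rw [blockList_length hG]; omega)]
  exact hjm


lemma ff_tail_mem {i n : ℕ} (h1 : MM G i ≤ n) (h2 : n < MM G (i + 1))
    (h3 : (AL G i).length ≤ n - MM G i) : ff G n ∈ Gi G i := by
  have hbe : blk G n = i := blk_eq G h1 h2
  have hlen : n - MM G i < (blockList G i).length := by
    rw [blockList_length hG]; omega
  rw [ff, hbe, List.getD_eq_getElem _ _ hlen]
  have hlen' : n - MM G i - (AL G i).length < (BL G i).length := by
    have hl : (blockList G i).length = (AL G i).length + (BL G i).length :=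
      List.length_append
    omega
  simp only [blockList]
  rw [List.getElem_append_right h3]
  have : (BL G i)[n - MM G i - (AL G i).length] ∈ BL G i := List.getElem_mem _
  simp only [BL, Finset.mem_sort] at this
  exact this

lemma image_tail (i : ℕ) :
    (Finset.Ico (MM G (i + 1) - (Gi G i).card) (MM G (i + 1))).image (ff G) = Gi G i := by
  have hcard := card_le hG i
  have hmm := MM_lt G i
  set g := (Gi G i).card
  set b := MM G (i + 1)
  set a := b - g with ha
  have hsub : (Finset.Ico a b).image (ff G) ⊆ Gi G i := by
    intro m hm
    obtain ⟨k, hk, rfl⟩ := Finset.mem_image.mp hm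
    rw [Finset.mem_Ico] at hk
    refine ff_tail_mem hG (by omega) hk.2 ?_
    rw [AL_length hG]
    omega
  refine Finset.eq_of_subset_of_card_le hsub ?_
  rw [Finset.card_image_of_injective _ (ff_inj hG), Nat.card_Ico]
  omega

lemma sum_tail {X : Type*} [AddCommMonoid X] (y : ℕ → X) (i : ℕ) :
    ∑ k ∈ Finset.Ico (MM G (i + 1) - (Gi G i).card) (MM G (i + 1)), y (ff G k)
      = ∑ j ∈ Gi G i, y j := by
  conv_rhs => rw [← image_tail hG i]
  rw [Finset.sum_image (fun _ _ _ _ h => ff_inj hG h)]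

end Stmt13Aux

theorem vanishing {X : Type*} [NormedAddCommGroup X] (y : ℕ → X)
    (H : ∀ σ : Equiv.Perm ℕ, ∃ l,
      Tendsto (fun n => ∑ k ∈ Finset.range n, y (σ k)) atTop (𝓝 l)) :
    ∀ ε > 0, ∃ N : ℕ, ∀ Gs : Finset ℕ, (∀ j ∈ Gs, N ≤ j) → ‖∑ j ∈ Gs, y j‖ ≤ ε := by
  by_contra hcon
  push_neg at hcon
  obtain ⟨ε, hε, hbad⟩ := hcon
  choose G hG hG2 using hbad
  let σ : Equiv.Perm ℕ :=
    Equiv.ofBijective (Stmt13Aux.ff G) ⟨Stmt13Aux.ff_inj hG, Stmt13Aux.ff_surj hG⟩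
  obtain ⟨l, hl⟩ := H σ
  have hc := hl.cauchySeq
  rw [Metric.cauchySeq_iff] at hc
  obtain ⟨N, hN⟩ := hc ε hε
  have hcard := Stmt13Aux.card_le hG N
  have hmm := Stmt13Aux.MM_lt G N
  have hge := Stmt13Aux.MM_ge G N
  set b := Stmt13Aux.MM G (N + 1) with hbdef
  set a := b - (Stmt13Aux.Gi G N).card with hadef
  have hab : a ≤ b := Nat.sub_le _ _
  have hNa : N ≤ a := by omega
  have hNb : N ≤ b := by omega
  have hdist := hN b hNb a hNa
  rw [dist_eq_norm, ← Finset.sum_Ico_eq_sub _ hab] at hdist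
  have hsum : ∑ k ∈ Finset.Ico a b, y (σ k) = ∑ j ∈ Stmt13Aux.Gi G N, y j :=
    Stmt13Aux.sum_tail hG y N
  rw [hsum] at hdist
  exact absurd hdist (not_lt.mpr (le_of_lt (hG2 (Stmt13Aux.MM G N))))


end Aux

/-- the unit vectors `e_n` form an unconditional Schauder basis of `𝒜̃`:
for every `α ∈ 𝒜̃` and every permutation `σ₀` of `ℕ`, the partial sums
`∑_{k<m} α_{σ₀(k)} e_{σ₀(k)}` converge to `α` in the norm of `𝒜̃`. -/
theorem stmt13 (X : Type*) [NormedAddCommGroup X] [NormedSpace ℝ X] [CompleteSpace X]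
    (x : ℕ → X) (hx : ∀ n, x n ≠ 0) :
    ∀ α : ℕ → ℝ,
      (∀ σ : Equiv.Perm ℕ, ∃ l,
        Tendsto (fun n => ∑ k ∈ Finset.range n, α (σ k) • x (σ k)) atTop (𝓝 l)) →
      ∀ σ₀ : Equiv.Perm ℕ,
        Tendsto (fun m => ⨆ r : Equiv.Perm ℕ × ℕ,
            ‖∑ k ∈ Finset.range r.2,
              (α (r.1 k) -
                ∑ i ∈ Finset.range m, α (σ₀ i) * (if r.1 k = σ₀ i then 1 else 0)) •
                x (r.1 k)‖)
          atTop (𝓝 0) := by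
  intro α H σ₀
  have key := vanishing (fun j => α j • x j) H
  rw [Metric.tendsto_atTop]
  intro ε hε
  obtain ⟨N, hN⟩ := key (ε / 2) (by positivity)
  refine ⟨(Finset.range N).sup (fun j => σ₀.symm j) + 1, fun m hm => ?_⟩
  have hterm : ∀ (σ : Equiv.Perm ℕ) (k : ℕ),
      (α (σ k) - ∑ i ∈ Finset.range m, α (σ₀ i) * (if σ k = σ₀ i then 1 else 0)) • x (σ k)
        = if m ≤ σ₀.symm (σ k) then α (σ k) • x (σ k) else 0 := by
    intro σ k
    have h1 : ∀ i, α (σ₀ i) * (if σ k = σ₀ i then 1 else 0)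
        = if i = σ₀.symm (σ k) then α (σ k) else 0 := by
      intro i
      by_cases h : σ k = σ₀ i
      · simp [h]
      · have h' : i ≠ σ₀.symm (σ k) := by
          intro hh; apply h; rw [hh]; simp
        simp [h, h']
    rw [Finset.sum_congr rfl (fun i _ => h1 i),
      Finset.sum_ite_eq' (Finset.range m) (σ₀.symm (σ k)) (fun _ => α (σ k))]
    by_cases hc : σ₀.symm (σ k) < m
    · simp [Finset.mem_range.mpr hc, not_le.mpr hc]
    · simp only [Finset.mem_range]
      rw [if_neg hc, if_pos (not_lt.mp hc), sub_zero]
  have hbound : ∀ r : Equiv.Perm ℕ × ℕ,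
      ‖∑ k ∈ Finset.range r.2,
        (α (r.1 k) -
          ∑ i ∈ Finset.range m, α (σ₀ i) * (if r.1 k = σ₀ i then 1 else 0)) •
          x (r.1 k)‖ ≤ ε / 2 := by
    rintro ⟨σ, n⟩
    simp only
    rw [Finset.sum_congr rfl (fun k _ => hterm σ k), ← Finset.sum_filter]
    set T := (Finset.range n).filter (fun k => m ≤ σ₀.symm (σ k)) with hT
    rw [← Finset.sum_image (f := fun j => α j • x j)
      (g := fun k => σ k) (fun a _ b _ h => σ.injective h)]
    apply hN
    intro j hj
    obtain ⟨k, hk, rfl⟩ := Finset.mem_image.mp hj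
    rw [hT, Finset.mem_filter] at hk
    by_contra hlt
    push_neg at hlt
    have : σ₀.symm (σ k) ≤ (Finset.range N).sup (fun j => σ₀.symm j) :=
      Finset.le_sup (f := fun j => σ₀.symm j) (Finset.mem_range.mpr hlt)
    omega
  have hnonneg : (0:ℝ) ≤ ⨆ r : Equiv.Perm ℕ × ℕ,
      ‖∑ k ∈ Finset.range r.2,
        (α (r.1 k) -
          ∑ i ∈ Finset.range m, α (σ₀ i) * (if r.1 k = σ₀ i then 1 else 0)) •
          x (r.1 k)‖ := Real.iSup_nonneg (fun r => norm_nonneg _)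
  have hsup := Real.iSup_le hbound (by positivity)
  rw [Real.dist_eq, sub_zero, abs_of_nonneg hnonneg]
  linarith
end

section
/- Let {(x_n, f_n)} be an unconditional Schauder frame of a Banach space X with x_n ≠ 0, let 𝒜̃ be the Banach space of unconditionally summable coefficient sequences (with the permutation-sup norm), and let T̃ : 𝒜̃ → X be the summation operator. Then the map ℳ̃(α) = {f_n(T̃α)}_n is a bounded linear projection from 𝒜̃ onto S_X = {{f_n(x)} : x ∈ X}. -/
open Filter Topology


private lemma sum_range_getD {X : Type*} [AddCommMonoid X] (g : ℕ → X) :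
    ∀ L : List ℕ, ∑ k ∈ Finset.range L.length, g (L.getD k 0) = (L.map g).sum
  | [] => by simp
  | (a :: L) => by
      rw [List.length_cons, Finset.sum_range_succ']
      simp only [List.getD_cons_succ, List.getD_cons_zero, List.map_cons, List.sum_cons]
      rw [sum_range_getD g L, add_comm]

private lemma keyBound {X : Type*} [NormedAddCommGroup X] (g : ℕ → X)
    (h : ∀ σ : Equiv.Perm ℕ, ∃ l,
      Tendsto (fun n => ∑ k ∈ Finset.range n, g (σ k)) atTop (𝓝 l)) :
    ∃ M : ℝ, ∀ S : Finset ℕ, ‖∑ j ∈ S, g j‖ ≤ M := by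
  by_contra hcon
  push_neg at hcon
  set B : Finset ℕ → ℝ :=
    fun U => U.powerset.sup' (Finset.powerset_nonempty U) (fun A => ‖∑ j ∈ A, g j‖) with hB
  have hBle : ∀ U : Finset ℕ, ∀ A ⊆ U, ‖∑ j ∈ A, g j‖ ≤ B U := fun U A hA =>
    Finset.le_sup' (fun A => ‖∑ j ∈ A, g j‖) (Finset.mem_powerset.2 hA)
  let T : ℕ → Finset ℕ := fun n => Nat.rec ∅
    (fun i Ti => (Ti ∪ Finset.range i) ∪
      Classical.choose (hcon ((i : ℝ) + 2 * B (Ti ∪ Finset.range i)))) n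
  have hTsucc : ∀ i, T (i+1) = (T i ∪ Finset.range i) ∪
      Classical.choose (hcon ((i : ℝ) + 2 * B (T i ∪ Finset.range i))) := fun i => rfl
  have hTsub : ∀ i, T i ⊆ T (i+1) := fun i => by
    rw [hTsucc]; exact Finset.subset_union_left.trans Finset.subset_union_left
  have hrange : ∀ i, Finset.range i ⊆ T (i+1) := fun i => by
    rw [hTsucc]; exact Finset.subset_union_right.trans Finset.subset_union_left
  have hTnorm : ∀ i : ℕ, (i : ℝ) < ‖∑ j ∈ T (i+1), g j‖ := by
    intro i
    set U := T i ∪ Finset.range i with hU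
    set S := Classical.choose (hcon ((i : ℝ) + 2 * B U)) with hS
    have hSspec : (i : ℝ) + 2 * B U < ‖∑ j ∈ S, g j‖ :=
      Classical.choose_spec (hcon ((i : ℝ) + 2 * B U))
    have e1 : ∑ j ∈ T (i+1), g j = ∑ j ∈ U, g j + ∑ j ∈ S, g j - ∑ j ∈ U ∩ S, g j := by
      rw [hTsucc]
      exact eq_sub_of_add_eq (Finset.sum_union_inter)
    have e2 : ∑ j ∈ S, g j = ∑ j ∈ T (i+1), g j - ∑ j ∈ U, g j + ∑ j ∈ U ∩ S, g j := by
      rw [e1]; abel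
    have h2 : ‖∑ j ∈ S, g j‖ ≤
        ‖∑ j ∈ T (i+1), g j‖ + ‖∑ j ∈ U, g j‖ + ‖∑ j ∈ U ∩ S, g j‖ := by
      rw [e2]
      exact (norm_add_le _ _).trans (by
        have := norm_sub_le (∑ j ∈ T (i+1), g j) (∑ j ∈ U, g j); linarith)
    have b1 : ‖∑ j ∈ U, g j‖ ≤ B U := hBle U U (subset_refl U)
    have b2 : ‖∑ j ∈ U ∩ S, g j‖ ≤ B U := hBle U (U ∩ S) Finset.inter_subset_left
    linarith
  classical
  -- enumeration of the nested sets
  let b : ℕ → List ℕ := fun i => ((T (i+1)) \ (T i)).sort (· ≤ ·)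
  let J : ℕ → List ℕ := fun i => (List.range i).flatMap b
  have hJsucc : ∀ i, J (i+1) = J i ++ b i := by
    intro i
    show (List.range (i+1)).flatMap b = _
    rw [List.range_succ, List.flatMap_append]
    simp [J]
  have hbmem : ∀ i a, a ∈ b i ↔ a ∈ T (i+1) \ T i := by
    intro i a; simp [b, Finset.mem_sort]
  have hJfin : ∀ i, (J i).toFinset = T i := by
    intro i
    induction i with
    | zero => rfl
    | succ i ih =>
        rw [hJsucc, List.toFinset_append, ih]
        have hb : (b i).toFinset = T (i+1) \ T i := Finset.sort_toFinset _ _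
        rw [hb]
        exact Finset.union_sdiff_of_subset (hTsub i)
  have hJnodup : ∀ i, (J i).Nodup := by
    intro i
    induction i with
    | zero => exact List.nodup_nil
    | succ i ih =>
        rw [hJsucc, List.nodup_append]
        refine ⟨ih, Finset.sort_nodup _ _, ?_⟩
        intro a ha c hb hac
        subst hac
        have h1 : a ∈ T i := by rw [← hJfin i]; exact List.mem_toFinset.2 ha
        have h2 : a ∈ T (i+1) \ T i := (hbmem i a).1 hb
        exact (Finset.mem_sdiff.1 h2).2 h1
  have hJlen : ∀ i, (J i).length = (T i).card := by
    intro i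
    rw [← hJfin i, List.card_toFinset, (hJnodup i).dedup]
  have hJpre : ∀ i j, i ≤ j → J i <+: J j := by
    intro i j hij
    induction j, hij using Nat.le_induction with
    | base => exact List.prefix_refl _
    | succ j hij ih => exact ih.trans (by rw [hJsucc]; exact List.prefix_append _ _)
  have hcard : ∀ i, i ≤ (T (i+1)).card := fun i => by
    simpa using Finset.card_le_card (hrange i)
  let e : ℕ → ℕ := fun n => (J (n+2)).getD n 0
  have hlen2 : ∀ n, n < (J (n+2)).length := by
    intro n
    rw [hJlen]
    exact lt_of_lt_of_le (Nat.lt_succ_self n) (hcard (n+1))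
  have hkey : ∀ i n, n < (J i).length → e n = (J i).getD n 0 := by
    intro i n hn
    have h1 : J i <+: J (max i (n+2)) := hJpre _ _ (le_max_left _ _)
    have h2 : J (n+2) <+: J (max i (n+2)) := hJpre _ _ (le_max_right _ _)
    have hn2 := hlen2 n
    show (J (n+2)).getD n 0 = (J i).getD n 0
    rw [List.getD_eq_getElem _ _ hn2, List.getD_eq_getElem _ _ hn,
      h2.getElem hn2, h1.getElem hn]
  have hinj : Function.Injective e := by
    intro n m hnm
    have hn : n < (J (n+m+3)).length := by
      rw [hJlen]
      calc n < n + m + 2 := by omega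
        _ ≤ (T (n+m+3)).card := hcard (n+m+2)
    have hm : m < (J (n+m+3)).length := by
      rw [hJlen]
      calc m < n + m + 2 := by omega
        _ ≤ (T (n+m+3)).card := hcard (n+m+2)
    rw [hkey (n+m+3) n hn, hkey (n+m+3) m hm,
      List.getD_eq_getElem _ _ hn, List.getD_eq_getElem _ _ hm] at hnm
    exact ((hJnodup (n+m+3)).getElem_inj_iff).1 hnm
  have hsurj : Function.Surjective e := by
    intro m
    have hmT : m ∈ T (m+2) := by
      have : m ∈ Finset.range (m+1) := Finset.mem_range.2 (Nat.lt_succ_self m)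
      exact hrange (m+1) this
    have hmJ : m ∈ J (m+2) := by
      rw [← List.mem_toFinset, hJfin]; exact hmT
    obtain ⟨n, hn, hget⟩ := List.mem_iff_getElem.1 hmJ
    exact ⟨n, by rw [hkey (m+2) n hn, List.getD_eq_getElem _ _ hn, hget]⟩
  obtain ⟨l, hl⟩ := h (Equiv.ofBijective e ⟨hinj, hsurj⟩)
  have hl' : Tendsto (fun n => ∑ k ∈ Finset.range n, g (e k)) atTop (𝓝 l) := hl
  obtain ⟨M, hM⟩ := hl'.norm.bddAbove_range
  have hps : ∀ i, ∑ k ∈ Finset.range (T i).card, g (e k) = ∑ j ∈ T i, g j := by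
    intro i
    have : ∑ k ∈ Finset.range (T i).card, g (e k)
        = ∑ k ∈ Finset.range (J i).length, g ((J i).getD k 0) := by
      rw [hJlen]
      refine Finset.sum_congr rfl (fun k hk => ?_)
      rw [hkey i k (by rw [hJlen]; exact Finset.mem_range.1 hk)]
    rw [this, sum_range_getD, ← List.sum_toFinset _ (hJnodup i), hJfin]
  set i := Nat.ceil M with hi
  have h1 : ‖∑ k ∈ Finset.range (T (i+1)).card, g (e k)‖ ≤ M :=
    hM ⟨(T (i+1)).card, rfl⟩
  rw [hps (i+1)] at h1
  have h2 := hTnorm i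
  have h3 : M ≤ (i : ℝ) := Nat.le_ceil M
  linarith

/-- for an unconditional Schauder frame `{(x_n, f_n)}` of `X`, the map
`ℳ̃(α) = {f_n(T̃α)}` is a bounded linear projection from `𝒜̃` onto
`S_X = {{f_n(v)} : v ∈ X}` (where `T̃α = ∑ α_n x_n`). -/
theorem stmt14 (X : Type*) [NormedAddCommGroup X] [NormedSpace ℝ X] [CompleteSpace X]
    (x : ℕ → X) (f : ℕ → X →L[ℝ] ℝ) (hx : ∀ n, x n ≠ 0)
    (hF : ∀ (v : X) (σ : Equiv.Perm ℕ),
        Tendsto (fun n => ∑ k ∈ Finset.range n, f (σ k) v • x (σ k)) atTop (𝓝 v)) :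
    -- ℳ̃ maps 𝒜̃ into S_X
    (∀ (α : ℕ → ℝ) (l : X),
        (∀ σ : Equiv.Perm ℕ, ∃ l',
          Tendsto (fun n => ∑ k ∈ Finset.range n, α (σ k) • x (σ k)) atTop (𝓝 l')) →
        Tendsto (fun n => ∑ k ∈ Finset.range n, α k • x k) atTop (𝓝 l) →
        ∃ w : X, (fun n => f n l) = fun n => f n w) ∧
    -- ℳ̃ is idempotent
    (∀ (α : ℕ → ℝ) (l l' : X),
        (∀ σ : Equiv.Perm ℕ, ∃ l'',
          Tendsto (fun n => ∑ k ∈ Finset.range n, α (σ k) • x (σ k)) atTop (𝓝 l'')) →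
        Tendsto (fun n => ∑ k ∈ Finset.range n, α k • x k) atTop (𝓝 l) →
        Tendsto (fun n => ∑ k ∈ Finset.range n, f k l • x k) atTop (𝓝 l') →
        (fun n => f n l') = fun n => f n l) ∧
    -- ℳ̃ is bounded for the norm of 𝒜̃
    (∃ C : ℝ, ∀ (α : ℕ → ℝ) (l : X),
        (∀ σ : Equiv.Perm ℕ, ∃ l',
          Tendsto (fun n => ∑ k ∈ Finset.range n, α (σ k) • x (σ k)) atTop (𝓝 l')) →
        Tendsto (fun n => ∑ k ∈ Finset.range n, α k • x k) atTop (𝓝 l) →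
        (⨆ r : Equiv.Perm ℕ × ℕ, ‖∑ k ∈ Finset.range r.2, f (r.1 k) l • x (r.1 k)‖) ≤
          C * ⨆ r : Equiv.Perm ℕ × ℕ, ‖∑ k ∈ Finset.range r.2, α (r.1 k) • x (r.1 k)‖) ∧
    -- ℳ̃ maps 𝒜̃ onto S_X
    (∀ v : X, ∃ (α : ℕ → ℝ) (l : X),
        (∀ σ : Equiv.Perm ℕ, ∃ l',
          Tendsto (fun n => ∑ k ∈ Finset.range n, α (σ k) • x (σ k)) atTop (𝓝 l')) ∧
        Tendsto (fun n => ∑ k ∈ Finset.range n, α k • x k) atTop (𝓝 l) ∧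
        (fun n => f n l) = fun n => f n v) := by

  have hid : ∀ v : X, Tendsto (fun n => ∑ k ∈ Finset.range n, f k v • x k) atTop (𝓝 v) := by
    intro v
    simpa using hF v (Equiv.refl ℕ)
  refine ⟨?_, ?_, ?_, ?_⟩
  · intro α l _ _
    exact ⟨l, rfl⟩
  · intro α l l' _ _ h3
    have := tendsto_nhds_unique h3 (hid l)
    rw [this]
  · -- boundedness
    -- the family of partial-sum operators
    set G : (Equiv.Perm ℕ × ℕ) → X →L[ℝ] X :=
      fun r => ∑ k ∈ Finset.range r.2, (f (r.1 k)).smulRight (x (r.1 k)) with hG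
    have hGapp : ∀ (r : Equiv.Perm ℕ × ℕ) (v : X),
        G r v = ∑ k ∈ Finset.range r.2, f (r.1 k) v • x (r.1 k) := by
      intro r v
      simp [hG, ContinuousLinearMap.sum_apply]
    -- pointwise boundedness via keyBound
    have hpt : ∀ v : X, ∃ C, ∀ r : Equiv.Perm ℕ × ℕ, ‖G r v‖ ≤ C := by
      intro v
      obtain ⟨M, hM⟩ := keyBound (fun j => f j v • x j) (fun σ => ⟨v, hF v σ⟩)
      refine ⟨M, fun r => ?_⟩
      have himg : ∑ k ∈ Finset.range r.2, f (r.1 k) v • x (r.1 k)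
          = ∑ j ∈ (Finset.range r.2).image r.1, f j v • x j :=
        (Finset.sum_image (f := fun j => f j v • x j) (g := fun k => r.1 k)
          (fun a _ b _ hab => r.1.injective hab)).symm
      rw [hGapp, himg]
      exact hM _
    obtain ⟨C, hC⟩ := banach_steinhaus hpt
    have hC0 : 0 ≤ C := le_trans (norm_nonneg _) (hC (Equiv.refl ℕ, 0))
    refine ⟨C, fun α l hα hl => ?_⟩
    obtain ⟨M, hM⟩ := keyBound (fun j => α j • x j) hα
    -- RHS family is bounded above by M
    have hbdd : BddAbove (Set.range fun r : Equiv.Perm ℕ × ℕ =>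
        ‖∑ k ∈ Finset.range r.2, α (r.1 k) • x (r.1 k)‖) := by
      refine ⟨M, fun y hy => ?_⟩
      obtain ⟨r, rfl⟩ := hy
      have himg : ∑ k ∈ Finset.range r.2, α (r.1 k) • x (r.1 k)
          = ∑ j ∈ (Finset.range r.2).image r.1, α j • x j :=
        (Finset.sum_image (f := fun j => α j • x j) (g := fun k => r.1 k)
          (fun a _ b _ hab => r.1.injective hab)).symm
      show ‖∑ k ∈ Finset.range r.2, α (r.1 k) • x (r.1 k)‖ ≤ M
      rw [himg]
      exact hM _
    have hlle : ‖l‖ ≤ ⨆ r : Equiv.Perm ℕ × ℕ,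
        ‖∑ k ∈ Finset.range r.2, α (r.1 k) • x (r.1 k)‖ := by
      refine le_of_tendsto hl.norm (Filter.Eventually.of_forall fun n => ?_)
      have := le_ciSup hbdd ((Equiv.refl ℕ, n) : Equiv.Perm ℕ × ℕ)
      simpa using this
    refine ciSup_le fun r => ?_
    calc ‖∑ k ∈ Finset.range r.2, f (r.1 k) l • x (r.1 k)‖
        = ‖G r l‖ := by rw [hGapp]
      _ ≤ C * ‖l‖ := (G r).le_of_opNorm_le (hC r) l
      _ ≤ C * _ := mul_le_mul_of_nonneg_left hlle hC0
  · intro v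
    exact ⟨fun n => f n v, v, fun σ => ⟨v, hF v σ⟩, hid v, rfl⟩
end

section
/- There exists a Schauder frame of C[0,1] built from piecewise linear functions (a modified Faber–Schauder system): there is a sequence {φ_n} of piecewise linear functions in C[0,1] and a sequence {A_n} of bounded linear functionals on C[0,1] such that for every f ∈ C[0,1], f = ∑_{n=1}^∞ A_n(f) φ_n in the sup norm, while {φ_n} is not a Schauder basis of C[0,1] (the representation is not unique since φ_{2^m + 2^{m-1} + k} = φ_{2^m + k}). -/
open Filter Topology

namespace Stmt17

noncomputable section

abbrev I01 : Type := Set.Icc (0 : ℝ) 1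
abbrev CI : Type := C(I01, ℝ)

/-- the basic tent function -/
def tf (t : ℝ) : ℝ := max 0 (1 - |t|)

lemma tf_nonneg (t : ℝ) : 0 ≤ tf t := le_max_left _ _

lemma tf_eq_zero {t : ℝ} (h : 1 ≤ |t|) : tf t = 0 := max_eq_left (by linarith)

lemma tf_eq {t : ℝ} (h : |t| ≤ 1) : tf t = 1 - |t| := max_eq_right (by linarith)

lemma tf_cont : Continuous tf := by
  unfold tf; fun_prop

lemma tf_neg (t : ℝ) : tf (-t) = tf t := by simp [tf, abs_neg]

lemma tf_twoscale_nonneg {s : ℝ} (hs : 0 ≤ s) :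
    tf s = tf (2*s) + (tf (2*s - 1) + tf (2*s + 1)) / 2 := by
  have h1 : tf (2*s+1) = 0 := by
    rcases eq_or_lt_of_le hs with h | h
    · simp [← h, tf]
    · exact tf_eq_zero (by rw [abs_of_nonneg (by linarith)]; linarith)
  rcases le_total 1 s with h | h
  · rw [tf_eq_zero (by rwa [abs_of_nonneg hs]),
      tf_eq_zero (t := 2*s) (by rw [abs_of_nonneg (by linarith)]; linarith),
      tf_eq_zero (t := 2*s-1) (by rw [abs_of_nonneg (by linarith)]; linarith), h1]
    ring
  · rcases le_total (1/2 : ℝ) s with h2 | h2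
    · rw [tf_eq (by rw [abs_of_nonneg hs]; linarith),
        tf_eq_zero (t := 2*s) (by rw [abs_of_nonneg (by linarith)]; linarith),
        tf_eq (t := 2*s-1) (by rw [abs_of_nonneg (by linarith)]; linarith), h1,
        abs_of_nonneg hs, abs_of_nonneg (by linarith : (0:ℝ) ≤ 2*s-1)]
      ring
    · rw [tf_eq (by rw [abs_of_nonneg hs]; linarith),
        tf_eq (t := 2*s) (by rw [abs_of_nonneg (by linarith)]; linarith),
        tf_eq (t := 2*s-1) (by rw [abs_of_nonpos (by linarith)]; linarith), h1,
        abs_of_nonneg hs, abs_of_nonneg (by linarith : (0:ℝ) ≤ 2*s),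
        abs_of_nonpos (by linarith : 2*s-1 ≤ (0:ℝ))]
      ring

lemma tf_twoscale (s : ℝ) :
    tf s = tf (2*s) + (tf (2*s - 1) + tf (2*s + 1)) / 2 := by
  rcases le_total 0 s with hs | hs
  · exact tf_twoscale_nonneg hs
  · have := tf_twoscale_nonneg (s := -s) (by linarith)
    rw [tf_neg, show 2 * -s - 1 = -(2*s+1) by ring, tf_neg,
      show 2 * -s + 1 = -(2*s-1) by ring, tf_neg,
      show 2 * -s = -(2*s) by ring, tf_neg] at this
    linarith

/-- partition of unity auxiliary -/
lemma pou_aux (N : ℕ) : ∀ t : ℝ, 0 ≤ t → t ≤ N →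
    ∑ k ∈ Finset.range (N+1), tf (t - k) = 1 := by
  induction N with
  | zero =>
    intro t h0 h1
    have : t = 0 := le_antisymm (by exact_mod_cast h1) h0
    simp [this, tf]
  | succ N ih =>
    intro t h0 h1
    rcases le_total t 1 with h | h
    · have hz : ∀ i ∈ Finset.range (N+2), i ∉ Finset.range 2 → tf (t - i) = 0 := by
        intro i _ hi2
        have : (2:ℕ) ≤ i := by simp at hi2; omega
        have h2 : (2:ℝ) ≤ (i:ℝ) := by exact_mod_cast this
        exact tf_eq_zero (by rw [abs_of_nonpos (by linarith)]; linarith)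
      rw [← Finset.sum_subset (by intro i hi; simp at hi ⊢; omega) hz]
      have e0 : tf t = 1 - t := by rw [tf_eq (by rw [abs_of_nonneg h0]; linarith), abs_of_nonneg h0]
      have e1 : tf (t - 1) = t := by
        rw [tf_eq (by rw [abs_of_nonpos (by linarith)]; linarith), abs_of_nonpos (by linarith)]
        ring
      simp [Finset.sum_range_succ, e0, e1]
    · rw [Finset.sum_range_succ']
      have hz : tf (t - (0:ℕ)) = 0 := by
        push_cast
        exact tf_eq_zero (by rw [sub_zero, abs_of_nonneg h0]; linarith)
      rw [hz, add_zero]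
      have : ∀ i : ℕ, tf (t - (i+1:ℕ)) = tf ((t-1) - i) := by
        intro i; push_cast; ring_nf
      simp_rw [this]
      apply ih (t-1) (by linarith)
      push_cast at h1 ⊢
      linarith

/-- the tent functions on `[0,1]` -/
def lam (M : ℕ) (j : ℤ) : CI :=
  ⟨fun x => tf (2^M * x.1 - j), tf_cont.comp (by fun_prop)⟩

lemma lam_apply (M : ℕ) (j : ℤ) (x : I01) : lam M j x = tf (2^M * x.1 - j) := rfl

lemma lam_nonneg (M : ℕ) (j : ℤ) (x : I01) : 0 ≤ lam M j x := tf_nonneg _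

lemma lam_zero_left {M : ℕ} {j : ℤ} (h : j ≤ -1) : lam M j = 0 := by
  ext x
  have hx0 : (0:ℝ) ≤ x.1 := x.2.1
  have hj : (j:ℝ) ≤ -1 := by exact_mod_cast h
  have h2 : (0:ℝ) ≤ 2^M * x.1 := by positivity
  exact tf_eq_zero (by rw [abs_of_nonneg (by linarith)]; linarith)

lemma lam_zero_right {M : ℕ} {j : ℤ} (h : (2^M : ℤ) + 1 ≤ j) : lam M j = 0 := by
  ext x
  have hx1 : x.1 ≤ 1 := x.2.2
  have hj : (2:ℝ)^M + 1 ≤ (j:ℝ) := by exact_mod_cast h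
  have h2 : (2:ℝ)^M * x.1 ≤ 2^M := by
    nlinarith [pow_pos (by norm_num : (0:ℝ) < 2) M]
  exact tf_eq_zero (by rw [abs_of_nonpos (by linarith)]; linarith)

lemma pou (M : ℕ) (x : I01) :
    ∑ k ∈ Finset.range (2^M + 1), lam M (k : ℤ) x = 1 := by
  have hc : ((2^M : ℕ) : ℝ) = (2:ℝ)^M := by push_cast; ring
  have h := pou_aux (2^M) (2^M * x.1) (mul_nonneg (by positivity) x.2.1)
    (by rw [hc]; nlinarith [pow_pos (by norm_num : (0:ℝ) < 2) M, x.2.2])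
  refine Eq.trans (Finset.sum_congr rfl ?_) h
  intro k _
  simp [lam_apply]

/-- clamp into `[0,1]` -/
def pt (r : ℝ) : I01 :=
  ⟨min 1 (max 0 r), ⟨le_min zero_le_one (le_max_left 0 r), min_le_left _ _⟩⟩

lemma pt_val {r : ℝ} (h0 : 0 ≤ r) (h1 : r ≤ 1) : (pt r : ℝ) = r := by
  simp [pt, max_eq_right h0, min_eq_right h1]

/-- piecewise linear interpolation at level `M` dyadics -/
def interp (M : ℕ) (g : CI) : CI :=
  ∑ k ∈ Finset.range (2^M + 1), g (pt (k / 2^M)) • lam M (k : ℤ)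

/-- the frame functions (Faber-Schauder system) -/
def phiF : ℕ → CI
  | 0 => lam 0 0
  | 1 => lam 0 1
  | (n+2) =>
    lam (Nat.log 2 (n+1) + 1) (2 * ((n+1 - 2^(Nat.log 2 (n+1)) : ℕ) : ℤ) + 1)

/-- the frame functionals -/
def AF : ℕ → (CI →L[ℝ] ℝ)
  | 0 => ContinuousMap.evalCLM ℝ (pt 0)
  | 1 => ContinuousMap.evalCLM ℝ (pt 1)
  | (n+2) =>
    ContinuousMap.evalCLM ℝ (pt ((2*((n+1 - 2^(Nat.log 2 (n+1)) : ℕ) : ℝ)+1) / 2^(Nat.log 2 (n+1)+1)))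
      - (2⁻¹ : ℝ) • (ContinuousMap.evalCLM ℝ (pt (((n+1 - 2^(Nat.log 2 (n+1)) : ℕ) : ℝ) / 2^(Nat.log 2 (n+1))))
        + ContinuousMap.evalCLM ℝ (pt ((((n+1 - 2^(Nat.log 2 (n+1)) : ℕ) : ℝ)+1) / 2^(Nat.log 2 (n+1)))))

lemma evalCLM_apply (x : I01) (g : CI) : ContinuousMap.evalCLM ℝ x g = g x := rfl

lemma index_eq (m k : ℕ) (hk : k < 2^m) :
    ∃ n : ℕ, 2^m + 1 + k = n + 2 ∧ Nat.log 2 (n+1) = m ∧ n + 1 - 2^m = k := by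
  have h1 : 1 ≤ 2^m := Nat.one_le_two_pow
  refine ⟨2^m + k - 1, by omega, ?_, by omega⟩
  have : 2^m + k - 1 + 1 = 2^m + k := by omega
  rw [this]
  exact Nat.log_eq_of_pow_le_of_lt_pow (by omega) (by rw [pow_succ]; omega)

lemma phiF_eq (m k : ℕ) (hk : k < 2^m) :
    phiF (2^m + 1 + k) = lam (m+1) (2 * (k:ℤ) + 1) := by
  obtain ⟨n, h1, h2, h3⟩ := index_eq m k hk
  rw [h1]
  simp only [phiF, h2, h3]

lemma AF_eq (m k : ℕ) (hk : k < 2^m) (g : CI) :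
    AF (2^m + 1 + k) g
      = g (pt ((2*(k:ℝ)+1) / 2^(m+1)))
        - (g (pt ((k:ℝ) / 2^m)) + g (pt (((k:ℝ)+1) / 2^m))) / 2 := by
  obtain ⟨n, h1, h2, h3⟩ := index_eq m k hk
  rw [h1]
  simp only [AF, h2, h3, ContinuousLinearMap.sub_apply, ContinuousLinearMap.smul_apply,
    ContinuousLinearMap.add_apply, evalCLM_apply, smul_eq_mul]
  ring

/-- partial sums -/
def S (n : ℕ) (g : CI) : CI := ∑ i ∈ Finset.range n, AF i g • phiF i

lemma sum_split {M : Type*} [AddCommMonoid M] (N : ℕ) (F : ℕ → M) :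
    ∑ j ∈ Finset.range (2*N+1), F j
      = ∑ k ∈ Finset.range (N+1), F (2*k) + ∑ k ∈ Finset.range N, F (2*k+1) := by
  induction N with
  | zero => simp
  | succ N ih =>
    rw [show 2*(N+1)+1 = (2*N+1)+1+1 by ring, Finset.sum_range_succ, Finset.sum_range_succ, ih]
    conv_rhs => rw [Finset.sum_range_succ (f := fun k => F (2*k)) (n := N+1),
      Finset.sum_range_succ (f := fun k => F (2*k+1)) (n := N)]
    rw [show 2*(N+1) = 2*N+1+1 by ring]
    abel

lemma lam_twoscale (M : ℕ) (j : ℤ) :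
    lam M j = lam (M+1) (2*j) + (2⁻¹:ℝ) • lam (M+1) (2*j-1) + (2⁻¹:ℝ) • lam (M+1) (2*j+1) := by
  ext x
  simp only [ContinuousMap.add_apply, ContinuousMap.smul_apply, lam_apply, smul_eq_mul]
  have h := tf_twoscale (2^M * x.1 - j)
  rw [show 2*(2^M * x.1 - (j:ℝ)) = 2^(M+1) * x.1 - ((2*j : ℤ) : ℝ) by push_cast; ring] at h
  rw [show 2^(M+1) * x.1 - ((2*j : ℤ):ℝ) - 1 = 2^(M+1) * x.1 - ((2*j+1 : ℤ) : ℝ) by push_cast; ring,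
    show 2^(M+1) * x.1 - ((2*j : ℤ):ℝ) + 1 = 2^(M+1) * x.1 - ((2*j-1 : ℤ) : ℝ) by push_cast; ring] at h
  rw [h]
  ring

/-- the key refinement identity -/
lemma step (m : ℕ) (g : CI) :
    interp m g + ∑ k ∈ Finset.range (2^m), AF (2^m + 1 + k) g • lam (m+1) (2*(k:ℤ)+1)
      = interp (m+1) g := by
  set N := 2^m with hN
  have h2N : 2^(m+1) = 2*N := by rw [pow_succ]; ring
  -- coefficients at level m+1
  set c : ℕ → ℝ := fun j => g (pt (j / 2^(m+1))) with hc
  have hceq : ∀ k : ℕ, g (pt ((k:ℝ) / 2^m)) = c (2*k) := by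
    intro k
    simp only [hc]
    congr 2
    push_cast
    rw [pow_succ]
    field_simp
  -- expand interp m via two-scale
  have e1 : interp m g
      = ∑ k ∈ Finset.range (N+1), c (2*k) • lam (m+1) (2*(k:ℤ))
        + ∑ k ∈ Finset.range (N+1), (c (2*k) * 2⁻¹) • lam (m+1) (2*(k:ℤ)-1)
        + ∑ k ∈ Finset.range (N+1), (c (2*k) * 2⁻¹) • lam (m+1) (2*(k:ℤ)+1) := by
    rw [interp, ← Finset.sum_add_distrib, ← Finset.sum_add_distrib]
    apply Finset.sum_congr rfl
    intro k _
    rw [hceq, lam_twoscale m (k:ℤ)]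
    rw [smul_add, smul_add, smul_smul, smul_smul]
  -- middle sum : shift index, first term vanishes
  have e2 : ∑ k ∈ Finset.range (N+1), (c (2*k) * 2⁻¹) • lam (m+1) (2*(k:ℤ)-1)
      = ∑ k ∈ Finset.range N, (c (2*(k+1)) * 2⁻¹) • lam (m+1) (2*(k:ℤ)+1) := by
    rw [Finset.sum_range_succ']
    rw [show (2*((0:ℕ):ℤ)-1 : ℤ) = -1 by norm_num, lam_zero_left (le_refl (-1 : ℤ))]
    rw [smul_zero, add_zero]
    apply Finset.sum_congr rfl
    intro k _
    congr 1
    push_cast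
    ring
  -- last sum : drop final term
  have e3 : ∑ k ∈ Finset.range (N+1), (c (2*k) * 2⁻¹) • lam (m+1) (2*(k:ℤ)+1)
      = ∑ k ∈ Finset.range N, (c (2*k) * 2⁻¹) • lam (m+1) (2*(k:ℤ)+1) := by
    rw [Finset.sum_range_succ]
    rw [lam_zero_right (by push_cast [hN]; rw [pow_succ]; push_cast; omega), smul_zero, add_zero]
  -- right side split even/odd
  have e4 : interp (m+1) g
      = ∑ k ∈ Finset.range (N+1), c (2*k) • lam (m+1) (2*(k:ℤ))
        + ∑ k ∈ Finset.range N, c (2*k+1) • lam (m+1) (2*(k:ℤ)+1) := by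
    rw [interp, h2N, sum_split (N := N) (F := fun j => c j • lam (m+1) (j : ℤ))]
    congr 1
    all_goals first
      | rfl
      | (apply Finset.sum_congr rfl; intro k _; norm_cast)
  rw [e1, e2, e3, e4]
  rw [add_assoc, add_assoc, ← Finset.sum_add_distrib, ← Finset.sum_add_distrib]
  congr 1
  apply Finset.sum_congr rfl
  intro k hk
  have hkN : k < N := Finset.mem_range.1 hk
  rw [AF_eq m k hkN g]
  have hk1 : g (pt (((k:ℝ)+1) / 2^m)) = c (2*(k+1)) := by
    rw [show ((k:ℝ)+1) = ((k+1:ℕ):ℝ) by push_cast; ring, hceq]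
  have harg : g (pt ((2*(k:ℝ)+1) / 2^(m+1))) = c (2*k+1) := by
    simp only [hc]; congr 2; push_cast; ring
  rw [hk1, harg, hceq, ← add_smul, ← add_smul]
  congr 1
  ring

lemma S_two (g : CI) : S 2 g = interp 0 g := by
  have : (2:ℕ) = 0 + 1 + 1 := rfl
  rw [S, Finset.sum_range_succ, Finset.sum_range_succ, Finset.sum_range_zero, zero_add]
  rw [interp]
  norm_num [Finset.sum_range_succ]
  rw [show AF 0 = ContinuousMap.evalCLM ℝ (pt 0) from rfl,
    show AF 1 = ContinuousMap.evalCLM ℝ (pt 1) from rfl,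
    show phiF 0 = lam 0 0 from rfl, show phiF 1 = lam 0 1 from rfl]
  simp [evalCLM_apply]

lemma S_checkpoint (m : ℕ) (g : CI) : S (2^m + 1) g = interp m g := by
  induction m with
  | zero => exact S_two g
  | succ m ih =>
    have h : 2^(m+1) + 1 = 2^m + 1 + 2^m := by rw [pow_succ]; ring
    rw [h, S, Finset.sum_range_add, ← S]
    rw [ih, ← step m g]
    congr 1
    apply Finset.sum_congr rfl
    intro k hk
    have hkm : k < 2^m := Finset.mem_range.1 hk
    rw [phiF_eq m k hkm]

lemma S_block (m : ℕ) (g : CI) (K : ℕ) (hK : K ≤ 2^m) :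
    S (2^m + 1 + K) g
      = interp m g + ∑ k ∈ Finset.range K, AF (2^m + 1 + k) g • lam (m+1) (2*(k:ℤ)+1) := by
  rw [S, Finset.sum_range_add, ← S, S_checkpoint m g]
  congr 1
  apply Finset.sum_congr rfl
  intro k hk
  rw [phiF_eq m k (lt_of_lt_of_le (Finset.mem_range.1 hk) hK)]


lemma lam_supp {M : ℕ} {j : ℤ} {x : I01} (h : lam M j x ≠ 0) : |2^M * x.1 - j| < 1 := by
  by_contra hc
  exact h (tf_eq_zero (le_of_not_gt hc))

lemma interp_dist (m : ℕ) (g : CI) (δ ε : ℝ) (hε : 0 ≤ ε) (hδ : (1:ℝ)/2^m < δ)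
    (hg : ∀ x y : I01, dist x y < δ → dist (g x) (g y) ≤ ε) (x : I01) :
    |interp m g x - g x| ≤ ε := by
  have hpou := pou m x
  have h2m : (0:ℝ) < 2^m := by positivity
  have hval : interp m g x = ∑ k ∈ Finset.range (2^m+1), g (pt (k / 2^m)) * lam m (k:ℤ) x := by
    simp [interp, ContinuousMap.coe_sum, Finset.sum_apply]
  have hgx : g x = ∑ k ∈ Finset.range (2^m+1), g x * lam m (k:ℤ) x := by
    rw [← Finset.mul_sum, hpou, mul_one]
  rw [hval]
  calc |∑ k ∈ Finset.range (2^m+1), g (pt (k / 2^m)) * lam m (k:ℤ) x - g x|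
      = |∑ k ∈ Finset.range (2^m+1), (g (pt (k / 2^m)) - g x) * lam m (k:ℤ) x| := by
        conv_lhs => rw [hgx, ← Finset.sum_sub_distrib]
        congr 1
        apply Finset.sum_congr rfl
        intro k _
        ring
    _ ≤ ∑ k ∈ Finset.range (2^m+1), |(g (pt (k / 2^m)) - g x) * lam m (k:ℤ) x| :=
        Finset.abs_sum_le_sum_abs _ _
    _ ≤ ∑ k ∈ Finset.range (2^m+1), ε * lam m (k:ℤ) x := by
        apply Finset.sum_le_sum
        intro k hk
        rw [abs_mul, abs_of_nonneg (lam_nonneg m k x)]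
        rcases eq_or_ne (lam m (k:ℤ) x) 0 with h0 | h0
        · rw [h0]; simp
        · apply mul_le_mul_of_nonneg_right _ (lam_nonneg m k x)
          have hs := lam_supp h0
          have hk2 : (k:ℝ) ≤ 2^m := by
            have := Finset.mem_range.1 hk
            have : k ≤ 2^m := by omega
            exact_mod_cast this
          have hk0 : (0:ℝ) ≤ (k:ℝ)/2^m := by positivity
          have hk1 : (k:ℝ)/2^m ≤ 1 := by rw [div_le_one h2m]; exact hk2
          have hd : dist (pt ((k:ℝ) / 2^m)) x < δ := by
            rw [Subtype.dist_eq, pt_val hk0 hk1, Real.dist_eq]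
            have heq : (k:ℝ)/2^m - x.1 = (((k:ℤ):ℝ) - 2^m * x.1)/2^m := by
              push_cast
              field_simp
            rw [heq, abs_div, abs_of_pos h2m, abs_sub_comm]
            calc |2^m * x.1 - ((k:ℤ):ℝ)| / 2^m < 1 / 2^m := by gcongr
              _ < δ := hδ
          have := hg _ _ hd
          rwa [Real.dist_eq] at this
    _ = ε * ∑ k ∈ Finset.range (2^m+1), lam m (k:ℤ) x := by rw [Finset.mul_sum]
    _ = ε := by rw [hpou, mul_one]

lemma tail_dist (m K : ℕ) (hK : K ≤ 2^m) (g : CI) (δ ε : ℝ) (hε : 0 ≤ ε)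
    (hδ : (1:ℝ)/2^(m+1) < δ)
    (hg : ∀ x y : I01, dist x y < δ → dist (g x) (g y) ≤ ε) (x : I01) :
    |(∑ k ∈ Finset.range K, AF (2^m+1+k) g • lam (m+1) (2*(k:ℤ)+1)) x| ≤ ε := by
  have h2m : (0:ℝ) < 2^m := by positivity
  have h2m1 : (0:ℝ) < 2^(m+1) := by positivity
  have hcoef : ∀ k : ℕ, k < K → |AF (2^m+1+k) g| ≤ ε := by
    intro k hk
    have hkm : k < 2^m := lt_of_lt_of_le hk hK
    have hkm' : (k:ℝ) + 1 ≤ 2^m := by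
      have : (k+1 : ℕ) ≤ 2^m := hkm
      exact_mod_cast this
    rw [AF_eq m k hkm g]
    -- the three points
    have hl0 : (0:ℝ) ≤ (k:ℝ)/2^m := by positivity
    have hl1 : (k:ℝ)/2^m ≤ 1 := by rw [div_le_one h2m]; linarith
    have hr0 : (0:ℝ) ≤ ((k:ℝ)+1)/2^m := by positivity
    have hr1 : ((k:ℝ)+1)/2^m ≤ 1 := by rw [div_le_one h2m]; linarith
    have hm0 : (0:ℝ) ≤ (2*(k:ℝ)+1)/2^(m+1) := by positivity
    have hm1 : (2*(k:ℝ)+1)/2^(m+1) ≤ 1 := by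
      rw [div_le_one h2m1, pow_succ]
      linarith
    have hdl : dist (pt ((2*(k:ℝ)+1)/2^(m+1))) (pt ((k:ℝ)/2^m)) < δ := by
      rw [Subtype.dist_eq, pt_val hm0 hm1, pt_val hl0 hl1, Real.dist_eq]
      have : (2*(k:ℝ)+1)/2^(m+1) - (k:ℝ)/2^m = 1/2^(m+1) := by
        rw [pow_succ]
        field_simp
        ring
      rw [this, abs_of_pos (by positivity)]
      exact hδ
    have hdr : dist (pt ((2*(k:ℝ)+1)/2^(m+1))) (pt (((k:ℝ)+1)/2^m)) < δ := by
      rw [Subtype.dist_eq, pt_val hm0 hm1, pt_val hr0 hr1, Real.dist_eq]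
      have : (2*(k:ℝ)+1)/2^(m+1) - ((k:ℝ)+1)/2^m = -(1/2^(m+1)) := by
        rw [pow_succ]
        field_simp
        ring
      rw [this, abs_neg, abs_of_pos (by positivity)]
      exact hδ
    have h1 := hg _ _ hdl
    have h2 := hg _ _ hdr
    rw [Real.dist_eq] at h1 h2
    have : g (pt ((2*(k:ℝ)+1) / 2^(m+1)))
        - (g (pt ((k:ℝ) / 2^m)) + g (pt (((k:ℝ)+1) / 2^m))) / 2
        = ((g (pt ((2*(k:ℝ)+1) / 2^(m+1))) - g (pt ((k:ℝ) / 2^m)))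
          + (g (pt ((2*(k:ℝ)+1) / 2^(m+1))) - g (pt (((k:ℝ)+1) / 2^m)))) / 2 := by ring
    rw [this]
    calc |_ / 2| ≤ (|g (pt ((2*(k:ℝ)+1) / 2^(m+1))) - g (pt ((k:ℝ) / 2^m))|
          + |g (pt ((2*(k:ℝ)+1) / 2^(m+1))) - g (pt (((k:ℝ)+1) / 2^m))|) / 2 := by
          rw [abs_div]
          simp only [abs_two]
          gcongr
          exact abs_add_le _ _
      _ ≤ (ε + ε)/2 := by gcongr
      _ = ε := by ring
  have hsub : ∑ k ∈ Finset.range K, lam (m+1) (2*(k:ℤ)+1) x ≤ 1 := by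
    have hpou := pou (m+1) x
    have himg : ∑ k ∈ Finset.range K, lam (m+1) (2*(k:ℤ)+1) x
        = ∑ j ∈ (Finset.range K).image (fun k : ℕ => 2*k+1), lam (m+1) ((j:ℕ):ℤ) x := by
      rw [Finset.sum_image (by intro a _ b _ h; simp only at h; omega)]
      apply Finset.sum_congr rfl
      intro k _
      norm_cast
    rw [himg]
    refine le_trans (Finset.sum_le_sum_of_subset_of_nonneg ?_ ?_) (le_of_eq hpou)
    · intro j hj
      simp only [Finset.mem_image, Finset.mem_range] at hj ⊢
      obtain ⟨k, hk, rfl⟩ := hj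
      have hkm : k < 2^m := lt_of_lt_of_le hk hK
      have h2 : 2^(m+1) = 2*2^m := by rw [pow_succ]; ring
      omega
    · intro j _ _
      exact lam_nonneg _ _ _
  calc |(∑ k ∈ Finset.range K, AF (2^m+1+k) g • lam (m+1) (2*(k:ℤ)+1)) x|
      = |∑ k ∈ Finset.range K, AF (2^m+1+k) g * lam (m+1) (2*(k:ℤ)+1) x| := by
        simp [ContinuousMap.coe_sum, Finset.sum_apply]
    _ ≤ ∑ k ∈ Finset.range K, |AF (2^m+1+k) g * lam (m+1) (2*(k:ℤ)+1) x| :=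
        Finset.abs_sum_le_sum_abs _ _
    _ ≤ ∑ k ∈ Finset.range K, ε * lam (m+1) (2*(k:ℤ)+1) x := by
        apply Finset.sum_le_sum
        intro k hk
        rw [abs_mul, abs_of_nonneg (lam_nonneg _ _ _)]
        exact mul_le_mul_of_nonneg_right (hcoef k (Finset.mem_range.1 hk)) (lam_nonneg _ _ _)
    _ = ε * ∑ k ∈ Finset.range K, lam (m+1) (2*(k:ℤ)+1) x := by rw [Finset.mul_sum]
    _ ≤ ε * 1 := by gcongr
    _ = ε := mul_one ε

lemma S_tendsto (g : CI) : Tendsto (fun n => S n g) atTop (𝓝 g) := by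
  rw [Metric.tendsto_atTop]
  intro ε hε
  obtain ⟨δ, hδpos, hgd⟩ := g.uniform_continuity (ε/4) (by linarith)
  have hg' : ∀ x y : I01, dist x y < δ → dist (g x) (g y) ≤ ε/4 :=
    fun x y h => le_of_lt (hgd h)
  obtain ⟨M, hM⟩ : ∃ M : ℕ, (1:ℝ)/2^M < δ := by
    obtain ⟨M, hM⟩ := pow_unbounded_of_one_lt (1/δ) (by norm_num : (1:ℝ) < 2)
    exact ⟨M, by rw [div_lt_iff₀ (by positivity)]
                 rw [div_lt_iff₀ hδpos] at hM
                 linarith⟩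
  refine ⟨2^M + 1, fun n hn => ?_⟩
  have hn1 : n - 1 ≠ 0 := by
    have : 1 ≤ 2^M := Nat.one_le_two_pow
    omega
  set m := Nat.log 2 (n-1) with hm
  have h1 : 2^m ≤ n-1 := Nat.pow_log_le_self 2 hn1
  have h2 : n-1 < 2^(m+1) := Nat.lt_pow_succ_log_self (by norm_num) _
  have hMm : M ≤ m := (Nat.le_log_iff_pow_le (by norm_num) hn1).2 (by omega)
  have hmono : (1:ℝ)/2^m ≤ 1/2^M := by
    gcongr
    all_goals first | norm_num | omega
  have hδm : (1:ℝ)/2^m < δ := lt_of_le_of_lt hmono hM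
  have hδm1 : (1:ℝ)/2^(m+1) < δ := by
    refine lt_of_le_of_lt ?_ hδm
    gcongr
    all_goals first | norm_num | omega
  set K := n - 1 - 2^m with hK
  have hKle : K ≤ 2^m := by
    have h3 : 2^(m+1) = 2*2^m := by rw [pow_succ]; ring
    omega
  have hn' : n = 2^m + 1 + K := by
    have : 1 ≤ 2^M := Nat.one_le_two_pow
    omega
  rw [hn', S_block m g K hKle]
  rw [ContinuousMap.dist_lt_iff hε]
  intro x
  rw [Real.dist_eq, ContinuousMap.add_apply]
  have b1 := interp_dist m g δ (ε/4) (by linarith) hδm hg' x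
  have b2 := tail_dist m K hKle g δ (ε/4) (by linarith) hδm1 hg' x
  calc |interp m g x + (∑ k ∈ Finset.range K, AF (2^m+1+k) g • lam (m+1) (2*(k:ℤ)+1)) x - g x|
      ≤ |interp m g x - g x|
        + |(∑ k ∈ Finset.range K, AF (2^m+1+k) g • lam (m+1) (2*(k:ℤ)+1)) x| := by
        rw [show interp m g x
            + (∑ k ∈ Finset.range K, AF (2^m+1+k) g • lam (m+1) (2*(k:ℤ)+1)) x - g x
          = (interp m g x - g x)
            + (∑ k ∈ Finset.range K, AF (2^m+1+k) g • lam (m+1) (2*(k:ℤ)+1)) x by ring]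
        exact abs_add_le _ _
    _ ≤ ε/4 + ε/4 := add_le_add b1 b2
    _ < ε := by linarith

/-- the frame with a repeated vector -/
def phiD : ℕ → CI
  | 0 => phiF 0
  | 1 => phiF 0
  | (n+2) => phiF (n+1)

def AD : ℕ → (CI →L[ℝ] ℝ)
  | 0 => AF 0
  | 1 => 0
  | (n+2) => AF (n+1)

lemma SD_eq (g : CI) (n : ℕ) :
    ∑ i ∈ Finset.range (n+2), AD i g • phiD i = S (n+1) g := by
  induction n with
  | zero =>
    simp [Finset.sum_range_succ, S, AD, phiD]
  | succ n ih =>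
    rw [Finset.sum_range_succ, ih]
    conv_rhs => rw [S, Finset.sum_range_succ]
    rfl

theorem main :
    ∃ (φ : ℕ → C(Set.Icc (0 : ℝ) 1, ℝ))
      (A : ℕ → C(Set.Icc (0 : ℝ) 1, ℝ) →L[ℝ] ℝ),
      (∀ g : C(Set.Icc (0 : ℝ) 1, ℝ),
        Tendsto (fun n => ∑ k ∈ Finset.range n, A k g • φ k) atTop (𝓝 g)) ∧
      (∃ m n : ℕ, m ≠ n ∧ φ m = φ n) ∧
      ¬ (∀ g : C(Set.Icc (0 : ℝ) 1, ℝ), ∃! β : ℕ → ℝ,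
        Tendsto (fun n => ∑ k ∈ Finset.range n, β k • φ k) atTop (𝓝 g)) := by
  refine ⟨phiD, AD, ?_, ⟨0, 1, by norm_num, rfl⟩, ?_⟩
  · intro g
    rw [← Filter.tendsto_add_atTop_iff_nat 2]
    have he : (fun n => ∑ k ∈ Finset.range (n+2), AD k g • phiD k)
        = fun n => S (n+1) g := funext (SD_eq g)
    rw [he]
    exact (Filter.tendsto_add_atTop_iff_nat 1).2 (S_tendsto g)
  · intro H
    obtain ⟨β, -, huniq⟩ := H 0
    have h1 : Tendsto (fun n => ∑ k ∈ Finset.range n,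
        (fun i => if i = 0 then (1:ℝ) else if i = 1 then -1 else 0) k • phiD k) atTop (𝓝 0) := by
      apply Tendsto.congr' _ tendsto_const_nhds
      filter_upwards [eventually_ge_atTop 2] with n hn
      have : ∑ k ∈ Finset.range n,
          (fun i => if i = 0 then (1:ℝ) else if i = 1 then -1 else 0) k • phiD k
          = ∑ k ∈ Finset.range 2,
          (fun i => if i = 0 then (1:ℝ) else if i = 1 then -1 else 0) k • phiD k := by
        symm
        apply Finset.sum_subset
        · intro i hi
          simp only [Finset.mem_range] at hi ⊢
          omega
        · intro i _ hi
          simp only [Finset.mem_range] at hi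
          have h2 : i ≠ 0 := by omega
          have h3 : i ≠ 1 := by omega
          simp [h2, h3]
      rw [this]
      simp [Finset.sum_range_succ, phiD]
    have h2 : Tendsto (fun n => ∑ k ∈ Finset.range n, (fun _ => (0:ℝ)) k • phiD k)
        atTop (𝓝 0) := by
      simpa using tendsto_const_nhds (α := CI) (f := atTop (α := ℕ))
    have e1 := huniq _ h1
    have e2 := huniq _ h2
    have : (fun i => if i = 0 then (1:ℝ) else if i = 1 then -1 else 0) = (fun _ => (0:ℝ)) := by
      rw [e1, e2]
    have := congrFun this 0
    norm_num at this

end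

end Stmt17


/-- there is a Schauder frame `{(φ_n, A_n)}` of `C[0,1]` which is not a
Schauder basis: the expansion `f = ∑ A_n(f) φ_n` holds for every `f`, some frame vectors
are repeated (`φ_m = φ_n` with `m ≠ n`), and the coefficient representation is not unique. -/
theorem stmt17 :
    ∃ (φ : ℕ → C(Set.Icc (0 : ℝ) 1, ℝ))
      (A : ℕ → C(Set.Icc (0 : ℝ) 1, ℝ) →L[ℝ] ℝ),
      (∀ g : C(Set.Icc (0 : ℝ) 1, ℝ),
        Tendsto (fun n => ∑ k ∈ Finset.range n, A k g • φ k) atTop (𝓝 g)) ∧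
      (∃ m n : ℕ, m ≠ n ∧ φ m = φ n) ∧
      ¬ (∀ g : C(Set.Icc (0 : ℝ) 1, ℝ), ∃! β : ℕ → ℝ,
        Tendsto (fun n => ∑ k ∈ Finset.range n, β k • φ k) atTop (𝓝 g)) := by
  exact Stmt17.main
end
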